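/- arXiv:1901.09328 — 9 statements merged into one kernel-verified Lean document; each statement's English description precedes it below -/
import Mathlib

section
/- Let μ be a Borel probability measure supported on [0,1] such that μ({0}) = 0 or μ({1}) = 0. Then the integral periodic zero set Z(μ) = {ξ ∈ ℝ : μ̂(ξ + k) = 0 for all k ∈ ℤ} is empty. -/
open MeasureTheory Filter Topology

/-- Fourier transform of a Borel measure on `ℝ`: `μ̂(ξ) = ∫ e^{-2πiξx} dμ(x)`. -/
noncomputable def FT (μ : Measure ℝ) (ξ : ℝ) : ℂ :=
  ∫ x, Complex.exp (-(2 * (Real.pi : ℂ) * Complex.I) * (ξ : ℂ) * (x : ℂ)) ∂μ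

/-- The integral periodic zero set `Z(μ) = {ξ : μ̂(ξ + k) = 0 for all k ∈ ℤ}`. -/
def Zset (μ : Measure ℝ) : Set ℝ := {ξ : ℝ | ∀ k : ℤ, FT μ (ξ + (k : ℝ)) = 0}

/-- `ρ = (1/2)(δ₀ + δ₁)`. -/
noncomputable def rho : Measure ℝ :=
  (2 : ENNReal)⁻¹ • Measure.dirac (0 : ℝ) + (2 : ENNReal)⁻¹ • Measure.dirac (1 : ℝ)

/-- Weak convergence of a sequence of measures, tested against bounded continuous
functions. -/
def WeakLim (s : ℕ → Measure ℝ) (ν₀ : Measure ℝ) : Prop :=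
  ∀ f : BoundedContinuousFunction ℝ ℝ,
    Tendsto (fun n => ∫ x, f x ∂(s n)) atTop (𝓝 (∫ x, f x ∂ν₀))

/-!
Push `μ` forward to the circle `ℝ/ℤ` as `ν`. Since `μ` lives on a half-open interval of length
one, `x ↦ e^{-2πiξx}` descends `μ`-a.e. to a measurable function `g` with `|g| = 1` on the
circle, and the `n`-th Fourier coefficient of the complex measure `g ν` is `μ̂(ξ - n)`. If
`ξ ∈ Z(μ)` all of them vanish, so `g = 0` `ν`-a.e. by uniqueness of Fourier coefficients
(the characters span a dense subspace of `L²(ν)`), contradicting `|g| = 1` and `ν ≠ 0`.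
-/

open scoped Real

theorem span_toLp_fourier_closure_eq_top {T : ℝ} [Fact (0 < T)] (ν : Measure (AddCircle T))
    [IsFiniteMeasure ν] {p : ENNReal} [Fact (1 ≤ p)] (hp : p ≠ ⊤) :
    (Submodule.span ℂ
      (Set.range fun n : ℤ => ContinuousMap.toLp p ν ℂ (fourier n))).topologicalClosure = ⊤ := by
  convert!
    (ContinuousMap.toLp_denseRange ℂ ν ℂ hp).topologicalClosure_map_submodule
      span_fourier_closure_eq_top
  rw [Submodule.map_span, ← Set.range_comp]
  rfl

theorem ae_eq_zero_of_forall_integral_fourier_mul_eq_zero {T : ℝ} [Fact (0 < T)]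
    {ν : Measure (AddCircle T)} [IsFiniteMeasure ν] {g : AddCircle T → ℂ} (hg : MemLp g 2 ν)
    (hfourier : ∀ n : ℤ, ∫ y, fourier n y * g y ∂ν = 0) : g =ᵐ[ν] 0 := by
  set G : Lp ℂ 2 ν := hg.toLp g
  have hspan : Submodule.span ℂ (Set.range fun n : ℤ => ContinuousMap.toLp 2 ν ℂ (fourier n))
      ≤ (ℂ ∙ G)ᗮ := by
    refine Submodule.span_le.2 ?_
    rintro _ ⟨n, rfl⟩
    rw [SetLike.mem_coe, Submodule.mem_orthogonal_singleton_iff_inner_left, L2.inner_def,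
      ← hfourier (-n)]
    refine integral_congr_ae ?_
    filter_upwards [ContinuousMap.coeFn_toLp (p := 2) (𝕜 := ℂ) ν (fourier n), hg.coeFn_toLp]
      with y hy hgy
    rw [hy, hgy, RCLike.inner_apply, fourier_neg, mul_comm]
  have hG : G ∈ (ℂ ∙ G)ᗮ := by
    refine Submodule.topologicalClosure_minimal _ hspan (Submodule.isClosed_orthogonal _) ?_
    rw [span_toLp_fourier_closure_eq_top ν (by norm_num)]
    exact Submodule.mem_top
  have hG0 : G = 0 := inner_self_eq_zero.1
    (Submodule.mem_orthogonal_singleton_iff_inner_left.1 hG)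
  have hG_ae : (G : AddCircle T → ℂ) =ᵐ[ν] 0 := hG0 ▸ Lp.coeFn_zero ℂ 2 ν
  exact hg.coeFn_toLp.symm.trans hG_ae

theorem fourier_coe_mul_exp (n : ℤ) (ξ x : ℝ) :
    fourier n (x : AddCircle (1 : ℝ)) * Complex.exp (-(2 * (π : ℂ) * Complex.I) * ξ * x) =
      Complex.exp (-(2 * (π : ℂ) * Complex.I) * (↑(ξ + ((-n : ℤ) : ℝ)) : ℂ) * x) := by
  rw [fourier_coe_apply, ← Complex.exp_add]
  push_cast
  ring_nf

theorem norm_exp_neg_two_pi_I_mul (ξ x : ℝ) :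
    ‖Complex.exp (-(2 * (π : ℂ) * Complex.I) * ξ * x)‖ = 1 := by
  rw [Complex.norm_exp]
  simp

theorem Zset_eq_empty_of_ae_eq_section (μ : Measure ℝ) [IsFiniteMeasure μ] (hμ : μ ≠ 0)
    {e : AddCircle (1 : ℝ) → ℝ} (he : Measurable e) (hae : ∀ᵐ x : ℝ ∂μ, e x = x) :
    Zset μ = ∅ := by
  have : Fact ((0 : ℝ) < 1) := ⟨one_pos⟩
  refine Set.eq_empty_of_forall_notMem fun ξ hξ => ?_
  have hmk : Measurable ((↑) : ℝ → AddCircle (1 : ℝ)) := AddCircle.measurable_mk'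
  set ν := μ.map ((↑) : ℝ → AddCircle (1 : ℝ))
  set g : AddCircle (1 : ℝ) → ℂ := fun y => Complex.exp (-(2 * (π : ℂ) * Complex.I) * ξ * e y)
  have hg : Measurable g := by fun_prop
  have hg_norm : ∀ y, ‖g y‖ = 1 := fun y => norm_exp_neg_two_pi_I_mul ξ (e y)
  have hcoeff : ∀ n : ℤ, ∫ y, fourier n y * g y ∂ν = 0 := by
    intro n
    rw [integral_map hmk.aemeasurable (by fun_prop), ← hξ (-n)]
    refine integral_congr_ae ?_
    filter_upwards [hae] with x hx
    simp only [g, hx, fourier_coe_mul_exp]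
  have hg0 : g =ᵐ[ν] 0 := ae_eq_zero_of_forall_integral_fourier_mul_eq_zero
    (MemLp.of_bound hg.aestronglyMeasurable 1 (ae_of_all _ fun y => (hg_norm y).le)) hcoeff
  have hν : ν = 0 := ae_eq_bot.1 <| eventually_false_iff_eq_bot.1 <| hg0.mono fun y hy => by
    simpa [hy] using hg_norm y
  exact hμ ((Measure.map_eq_zero_iff hmk.aemeasurable).1 hν)

theorem ae_mem_Ioc_of_ae_mem_Icc {α : Type*} [MeasurableSpace α] [PartialOrder α]
    {μ : Measure α} {a b : α} (hab : ∀ᵐ x ∂μ, x ∈ Set.Icc a b) (ha : μ {a} = 0) :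
    ∀ᵐ x ∂μ, x ∈ Set.Ioc a b := by
  filter_upwards [hab, measure_eq_zero_iff_ae_notMem.1 ha] with x hx hxa
  rw [← Set.Icc_sdiff_left]
  exact ⟨hx, hxa⟩

theorem ae_mem_Ico_of_ae_mem_Icc {α : Type*} [MeasurableSpace α] [PartialOrder α]
    {μ : Measure α} {a b : α} (hab : ∀ᵐ x ∂μ, x ∈ Set.Icc a b) (hb : μ {b} = 0) :
    ∀ᵐ x ∂μ, x ∈ Set.Ico a b := by
  filter_upwards [hab, measure_eq_zero_iff_ae_notMem.1 hb] with x hx hxb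
  rw [← Set.Icc_sdiff_right]
  exact ⟨hx, hxb⟩

/-- If `μ` is a probability measure on `[0,1]` with `μ({0}) = 0` or `μ({1}) = 0`,
then its integral periodic zero set is empty. -/
theorem stmt1 (μ : Measure ℝ) [IsProbabilityMeasure μ]
    (hsupp : μ (Set.Icc (0 : ℝ) 1)ᶜ = 0)
    (h : μ {0} = 0 ∨ μ {1} = 0) : Zset μ = ∅ := by
  have : Fact ((0 : ℝ) < 1) := ⟨one_pos⟩
  have hIcc : ∀ᵐ x ∂μ, x ∈ Set.Icc (0 : ℝ) (0 + 1) := mem_ae_iff.2 (by rwa [zero_add])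
  rcases h with h0 | h1
  · refine Zset_eq_empty_of_ae_eq_section μ (IsProbabilityMeasure.ne_zero μ)
      (AddCircle.measurableEquivIoc 1 0).measurable.subtype_val ?_
    filter_upwards [ae_mem_Ioc_of_ae_mem_Icc hIcc h0] with x hx
    exact AddCircle.equivIoc_coe_of_mem hx
  · refine Zset_eq_empty_of_ae_eq_section μ (IsProbabilityMeasure.ne_zero μ)
      (AddCircle.measurableEquivIco 1 0).measurable.subtype_val ?_
    filter_upwards [ae_mem_Ico_of_ae_mem_Icc hIcc (by rwa [zero_add])] with x hx
    exact AddCircle.equivIco_coe_of_mem hx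
end

section
/- Let μ be a Borel probability measure supported on [0,1]. Then the integral periodic zero set Z(μ) is nonempty if and only if μ = ρ = (1/2)(δ₀ + δ₁), the equal-weighted sum of Dirac masses at 0 and 1. -/
open MeasureTheory Filter Topology

/-!
If `ξ ∈ Z(μ)`, the functional `F ↦ ∫ e^{-2πiξx} F(x) dμ` on continuous functions on `ℝ/ℤ` kills
every character `e^{2πinx}`, so it vanishes identically by density of trigonometric polynomials.
Testing it on the periodization of `e^{2πiξx} x(1-x)` from `[0,1]` (possible because `x(1-x)`
vanishes at both endpoints) gives `∫ x(1-x) dμ = 0`, so `μ` lives on `{0,1}`. Then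
`μ̂(ξ) = μ{0} + μ{1} e^{-2πiξ} = 0` with `|e^{-2πiξ}| = 1` forces equal weights.
-/

open Complex in
noncomputable def fourierKernel (ξ x : ℝ) : ℂ := exp (-(2 * (Real.pi : ℂ) * I) * ξ * x)

theorem FT_eq_integral_fourierKernel (μ : Measure ℝ) (ξ : ℝ) :
    FT μ ξ = ∫ x, fourierKernel ξ x ∂μ := rfl

theorem continuous_fourierKernel (ξ : ℝ) : Continuous (fourierKernel ξ) := by
  unfold fourierKernel; fun_prop

theorem norm_fourierKernel (ξ x : ℝ) : ‖fourierKernel ξ x‖ = 1 := by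
  rw [fourierKernel, show -(2 * (Real.pi : ℂ) * Complex.I) * ξ * x =
    ((-(2 * Real.pi * ξ * x) : ℝ) : ℂ) * Complex.I by push_cast; ring]
  exact Complex.norm_exp_ofReal_mul_I _

theorem fourierKernel_add_left (ξ η x : ℝ) :
    fourierKernel (ξ + η) x = fourierKernel ξ x * fourierKernel η x := by
  simp only [fourierKernel, ← Complex.exp_add]
  push_cast; ring_nf

@[simp]
theorem fourierKernel_zero_left (x : ℝ) : fourierKernel 0 x = 1 := by
  simp [fourierKernel]

@[simp]
theorem fourierKernel_zero_right (ξ : ℝ) : fourierKernel ξ 0 = 1 := by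
  simp [fourierKernel]

theorem fourier_coe_eq_fourierKernel (n : ℤ) (x : ℝ) :
    fourier n (x : AddCircle (1 : ℝ)) = fourierKernel (-n) x := by
  rw [fourier_coe_apply, fourierKernel]
  push_cast; ring_nf

theorem fourierKernel_half_add_int_one (k : ℤ) : fourierKernel (1 / 2 + k) 1 = -1 := by
  rw [fourierKernel, show -(2 * (Real.pi : ℂ) * Complex.I) * ((1 / 2 + k : ℝ) : ℂ) * ((1 : ℝ) : ℂ) =
    -(Real.pi * Complex.I) + (-k : ℤ) * (2 * Real.pi * Complex.I) by push_cast; ring,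
    Complex.exp_add, Complex.exp_int_mul_two_pi_mul_I, Complex.exp_neg, Complex.exp_pi_mul_I]
  norm_num

theorem integrable_fourierKernel (μ : Measure ℝ) [IsFiniteMeasure μ] (ξ : ℝ) :
    Integrable (fourierKernel ξ) μ :=
  Integrable.of_bound (continuous_fourierKernel ξ).aestronglyMeasurable 1
    (ae_of_all _ fun x => (norm_fourierKernel ξ x).le)

theorem FT_smul_dirac_add_smul_dirac {c d : ENNReal} (hc : c ≠ ⊤) (hd : d ≠ ⊤) (a b ξ : ℝ) :
    FT (c • Measure.dirac a + d • Measure.dirac b) ξ =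
      c.toReal * fourierKernel ξ a + d.toReal * fourierKernel ξ b := by
  rw [FT_eq_integral_fourierKernel, integral_add_measure
      ((integrable_fourierKernel _ ξ).smul_measure hc)
      ((integrable_fourierKernel _ ξ).smul_measure hd),
    integral_smul_measure, integral_smul_measure, integral_dirac, integral_dirac]
  rfl

theorem FT_rho_half_add_int (k : ℤ) : FT rho (1 / 2 + k) = 0 := by
  rw [rho, FT_smul_dirac_add_smul_dirac (by simp) (by simp), fourierKernel_zero_right,
    fourierKernel_half_add_int_one]
  simp

theorem eq_of_FT_smul_dirac_add_smul_dirac_eq_zero {c d : ENNReal} (hc : c ≠ ⊤) (hd : d ≠ ⊤)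
    {ξ : ℝ} (h : FT (c • Measure.dirac 0 + d • Measure.dirac 1) ξ = 0) : c = d := by
  rw [FT_smul_dirac_add_smul_dirac hc hd, fourierKernel_zero_right, mul_one,
    add_eq_zero_iff_eq_neg] at h
  have hnorm := congrArg norm h
  rw [norm_neg, norm_mul, norm_fourierKernel, mul_one, Complex.norm_real, Complex.norm_real,
    Real.norm_of_nonneg ENNReal.toReal_nonneg, Real.norm_of_nonneg ENNReal.toReal_nonneg] at hnorm
  exact (ENNReal.toReal_eq_toReal_iff' hc hd).1 hnorm

theorem MeasureTheory.Measure.eq_smul_dirac_add_smul_dirac {α : Type*} [MeasurableSpace α]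
    [MeasurableSingletonClass α] {μ : Measure α} {a b : α} (hab : a ≠ b) (h : μ {a, b}ᶜ = 0) :
    μ = μ {a} • Measure.dirac a + μ {b} • Measure.dirac b := by
  calc μ = μ.restrict ({a} ∪ {b}) := (Measure.restrict_eq_self_of_ae_mem (ae_iff.2 h)).symm
    _ = _ := by
      rw [Measure.restrict_union (Set.disjoint_singleton.2 hab) (measurableSet_singleton b),
        Measure.restrict_singleton, Measure.restrict_singleton]

theorem integral_fourierKernel_mul_eq_zero_of_mem_Zset (μ : Measure ℝ) [IsFiniteMeasure μ]
    {ξ : ℝ} (hξ : ξ ∈ Zset μ) (F : C(AddCircle (1 : ℝ), ℂ)) :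
    ∫ x, fourierKernel ξ x * F x ∂μ = 0 := by
  have hbound (G : C(AddCircle (1 : ℝ), ℂ)) (x : ℝ) : ‖fourierKernel ξ x * G x‖ ≤ ‖G‖ := by
    rw [norm_mul, norm_fourierKernel, one_mul]
    exact G.norm_coe_le_norm _
  have hint (G : C(AddCircle (1 : ℝ), ℂ)) : Integrable (fun x => fourierKernel ξ x * G x) μ :=
    Integrable.of_bound ((continuous_fourierKernel ξ).mul
      (G.continuous.comp (AddCircle.continuous_mk' 1))).aestronglyMeasurable _
      (ae_of_all _ (hbound G))
  let L : C(AddCircle (1 : ℝ), ℂ) →ₗ[ℂ] ℂ :=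
    { toFun := fun G => ∫ x, fourierKernel ξ x * G x ∂μ
      map_add' := fun G H => by
        simp only [ContinuousMap.add_apply, mul_add, integral_add (hint G) (hint H)]
      map_smul' := fun c G => by
        simp only [ContinuousMap.smul_apply, smul_eq_mul, mul_left_comm _ c,
          integral_const_mul, RingHom.id_apply] }
  let Lc : C(AddCircle (1 : ℝ), ℂ) →L[ℂ] ℂ := L.mkContinuous (μ.real Set.univ) fun G => by
    rw [mul_comm]
    exact norm_integral_le_of_norm_le_const (ae_of_all _ (hbound G))
  have hfourier : Set.EqOn Lc (0 : C(AddCircle (1 : ℝ), ℂ) →L[ℂ] ℂ) (Set.range fourier) := by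
    rintro _ ⟨n, rfl⟩
    calc Lc (fourier n) = FT μ (ξ + ((-n : ℤ) : ℝ)) := by
          simp only [Lc, L, LinearMap.mkContinuous_apply, LinearMap.coe_mk, AddHom.coe_mk,
            FT_eq_integral_fourierKernel, fourier_coe_eq_fourierKernel, fourierKernel_add_left]
          push_cast; rfl
      _ = 0 := hξ (-n)
  have hdense :=
    Submodule.dense_iff_topologicalClosure_eq_top.2 (span_fourier_closure_eq_top (T := 1))
  exact congrArg (· F) (ContinuousLinearMap.ext_on hdense hfourier)

theorem integral_eq_zero_of_mem_Zset (μ : Measure ℝ) [IsFiniteMeasure μ]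
    (hsupp : μ (Set.Icc (0 : ℝ) 1)ᶜ = 0) {ξ : ℝ} (hξ : ξ ∈ Zset μ) {g : ℝ → ℂ}
    (hg : Continuous g) (hg₀ : g 0 = 0) (hg₁ : g 1 = 0) :
    ∫ x, g x ∂μ = 0 := by
  set h : ℝ → ℂ := fun x => fourierKernel (-ξ) x * g x
  have hh : h 0 = h 1 := by simp [h, hg₀, hg₁]
  let F : C(AddCircle (1 : ℝ), ℂ) :=
    ⟨AddCircle.liftIco 1 0 h, AddCircle.liftIco_zero_continuous hh
      ((continuous_fourierKernel _).mul hg).continuousOn⟩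
  have hF : ∀ x ∈ Set.Icc (0 : ℝ) 1, fourierKernel ξ x * F x = g x := by
    rintro x ⟨hx₀, hx₁⟩
    rcases hx₁.lt_or_eq with hx₁ | rfl
    · change fourierKernel ξ x * AddCircle.liftIco 1 0 h x = g x
      rw [AddCircle.liftIco_zero_coe_apply ⟨hx₀, hx₁⟩, ← mul_assoc, ← fourierKernel_add_left,
        add_neg_cancel, fourierKernel_zero_left, one_mul]
    · change fourierKernel ξ 1 * AddCircle.liftIco 1 0 h ((1 : ℝ) : AddCircle (1 : ℝ)) = g 1
      rw [AddCircle.coe_period, ← QuotientAddGroup.mk_zero, AddCircle.liftIco_zero_coe_apply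
        (by norm_num)]
      simp [h, hg₀, hg₁]
  rw [← integral_fourierKernel_mul_eq_zero_of_mem_Zset μ hξ F]
  exact integral_congr_ae ((ae_iff.2 hsupp).mono fun x hx => (hF x hx).symm)

theorem measure_Ioo_eq_zero_of_mem_Zset (μ : Measure ℝ) [IsFiniteMeasure μ]
    (hsupp : μ (Set.Icc (0 : ℝ) 1)ᶜ = 0) {ξ : ℝ} (hξ : ξ ∈ Zset μ) :
    μ (Set.Ioo 0 1) = 0 := by
  set p : ℝ → ℝ := fun x => x * (1 - x)
  have hp : Continuous p := by fun_prop
  have hIcc : ∀ᵐ x ∂μ, x ∈ Set.Icc (0 : ℝ) 1 := ae_iff.2 hsupp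
  have hp_nonneg : 0 ≤ᵐ[μ] p := hIcc.mono fun x hx => mul_nonneg hx.1 (by linarith [hx.2])
  have hp_int : Integrable p μ := Integrable.of_bound hp.aestronglyMeasurable 1 <|
    hIcc.mono fun x hx => by
      rw [Real.norm_of_nonneg (mul_nonneg hx.1 (by linarith [hx.2]))]
      nlinarith [hx.1, hx.2]
  have hp_zero : ∫ x, p x ∂μ = 0 := by
    have := integral_eq_zero_of_mem_Zset μ hsupp hξ (g := fun x => (p x : ℂ)) (by fun_prop)
      (by simp [p]) (by simp [p])
    rwa [integral_complex_ofReal, Complex.ofReal_eq_zero] at this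
  have hp_ae := (integral_eq_zero_iff_of_nonneg_ae hp_nonneg hp_int).1 hp_zero
  refine measure_eq_zero_iff_ae_notMem.2 (hp_ae.mono fun x hx hmem => ?_)
  exact (mul_pos hmem.1 (sub_pos.2 hmem.2)).ne' hx

/-- For a probability measure `μ` on `[0,1]`, the integral periodic zero set is
nonempty iff `μ = ρ = (1/2)(δ₀ + δ₁)`. -/
theorem stmt2 (μ : Measure ℝ) [IsProbabilityMeasure μ]
    (hsupp : μ (Set.Icc (0 : ℝ) 1)ᶜ = 0) :
    (Zset μ).Nonempty ↔ μ = rho := by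
  constructor
  · rintro ⟨ξ, hξ⟩
    have hpair : μ {0, 1}ᶜ = 0 := by
      rw [← Set.Icc_sdiff_Ioo_same zero_le_one, Set.compl_sdiff]
      exact measure_union_null (measure_Ioo_eq_zero_of_mem_Zset μ hsupp hξ) hsupp
    have hμ := Measure.eq_smul_dirac_add_smul_dirac zero_ne_one hpair
    have hweights : μ {0} = μ {1} := by
      refine eq_of_FT_smul_dirac_add_smul_dirac_eq_zero (measure_ne_top _ _) (measure_ne_top _ _)
        (ξ := ξ) ?_
      rw [← hμ]
      simpa using hξ 0
    have hmass : μ {1} + μ {1} = 1 := by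
      have := measure_univ (μ := μ)
      rw [hμ, hweights] at this
      simpa using this
    have hhalf : μ {1} = 2⁻¹ := ENNReal.eq_inv_of_mul_eq_one_left (by rwa [mul_two])
    rw [hμ, hweights, hhalf]
    rfl
  · rintro rfl
    exact ⟨1 / 2, FT_rho_half_add_int⟩
end

section
/- Let Φ be a family of Borel probability measures on [0,1] such that for every ν ∈ Φ and every weak limit ν₀ of sequences in Φ, the integral periodic zero set Z(ν) and Z(ν₀) are empty. Then for every x ∈ ℝ there exists ε_x > 0 such that for all ν ∈ Φ, sup_{k ∈ ℤ} |ν̂(x + k)| > ε_x. -/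
open MeasureTheory Filter Topology

/-! By Prokhorov's theorem, probability measures carried by `[0,1]` form a sequentially compact
family. If the conclusion failed at `x`, some sequence `νₙ ∈ Φ` would have `|ν̂ₙ(x + k)| ≤ 1/(n+1)`
for all `k`; a weakly convergent subsequence has a limit `ν₀` whose Fourier transform is the
pointwise limit, so `ν̂₀(x + k) = 0` for all `k`, i.e. `x ∈ Z(ν₀) = ∅`. -/

namespace MeasureTheory

lemma isTightMeasureSet_of_measure_compl_eq_zero {X : Type*} [MeasurableSpace X]
    [TopologicalSpace X] {S : Set (Measure X)} {K : Set X} (hK : IsCompact K)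
    (hS : ∀ μ ∈ S, μ Kᶜ = 0) : IsTightMeasureSet S :=
  isTightMeasureSet_iff_exists_isCompact_measure_compl_le.2 fun _ _ ↦
    ⟨K, hK, fun μ hμ ↦ (hS μ hμ).trans_le zero_le⟩

lemma ProbabilityMeasure.exists_tendsto_subseq_of_measure_compl_eq_zero {X : Type*}
    [MeasurableSpace X] [TopologicalSpace X] [T2Space X] [BorelSpace X]
    [TopologicalSpace.PseudoMetrizableSpace X] [TopologicalSpace.SeparableSpace X]
    {μ : ℕ → ProbabilityMeasure X} {K : Set X} (hK : IsCompact K)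
    (hμ : ∀ n, (μ n : Measure X) Kᶜ = 0) :
    ∃ μ₀ : ProbabilityMeasure X, ∃ φ : ℕ → ℕ, StrictMono φ ∧ Tendsto (μ ∘ φ) atTop (𝓝 μ₀) := by
  have hcompact : IsCompact (closure (Set.range μ)) :=
    isCompact_closure_of_isTightMeasureSet <|
      isTightMeasureSet_of_measure_compl_eq_zero hK (by rintro _ ⟨_, ⟨n, rfl⟩, rfl⟩; exact hμ n)
  obtain ⟨μ₀, -, φ, hφ, hlim⟩ :=
    hcompact.tendsto_subseq fun n ↦ subset_closure (Set.mem_range_self n)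
  exact ⟨μ₀, φ, hφ, hlim⟩

end MeasureTheory

lemma FT_eq_charFun (μ : Measure ℝ) (ξ : ℝ) : FT μ ξ = charFun μ (-(2 * Real.pi * ξ)) := by
  rw [FT, charFun_apply_real]
  congr 1 with x
  push_cast
  ring_nf

lemma tendsto_FT_of_tendsto {μ : ℕ → ProbabilityMeasure ℝ} {μ₀ : ProbabilityMeasure ℝ}
    (h : Tendsto μ atTop (𝓝 μ₀)) (ξ : ℝ) :
    Tendsto (fun n ↦ FT (μ n) ξ) atTop (𝓝 (FT μ₀ ξ)) := by
  simp only [FT_eq_charFun]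
  exact ProbabilityMeasure.tendsto_iff_tendsto_charFun.1 h _

lemma weakLim_of_tendsto {μ : ℕ → ProbabilityMeasure ℝ} {μ₀ : ProbabilityMeasure ℝ}
    (h : Tendsto μ atTop (𝓝 μ₀)) : WeakLim (fun n ↦ μ n) μ₀ :=
  ProbabilityMeasure.tendsto_iff_forall_integral_tendsto.1 h

theorem stmt4_general (Φ : Set (Measure ℝ))
    (hprob : ∀ ν ∈ Φ, IsProbabilityMeasure ν)
    (hsupp : ∀ ν ∈ Φ, ν (Set.Icc (0 : ℝ) 1)ᶜ = 0)
    (hZlim : ∀ ν₀ : Measure ℝ, IsProbabilityMeasure ν₀ →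
      (∃ s : ℕ → Measure ℝ, (∀ n, s n ∈ Φ) ∧ WeakLim s ν₀) → Zset ν₀ = ∅) :
    ∀ x : ℝ, ∃ εx > (0 : ℝ), ∀ ν ∈ Φ, ∃ k : ℤ, εx < ‖FT ν (x + (k : ℝ))‖ := by
  intro x
  by_contra! hsmall
  choose ν hνΦ hνsmall using fun n : ℕ ↦ hsmall (1 / (n + 1)) Nat.one_div_pos_of_nat
  let μ n : ProbabilityMeasure ℝ := ⟨ν n, hprob _ (hνΦ n)⟩
  obtain ⟨μ₀, φ, hφ, hlim⟩ :=
    ProbabilityMeasure.exists_tendsto_subseq_of_measure_compl_eq_zero (μ := μ) isCompact_Icc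
      fun n ↦ hsupp _ (hνΦ n)
  have hZ₀ : Zset μ₀ = ∅ :=
    hZlim μ₀ inferInstance ⟨_, fun n ↦ hνΦ (φ n), weakLim_of_tendsto hlim⟩
  have hx : x ∈ Zset μ₀ := fun k ↦ by
    refine tendsto_nhds_unique (tendsto_FT_of_tendsto hlim _) (squeeze_zero_norm (fun n ↦ ?_)
      (tendsto_one_div_add_atTop_nhds_zero_nat.comp hφ.tendsto_atTop))
    exact hνsmall (φ n) k
  simp [hZ₀] at hx

/-- If `Φ` is a family of probability measures on `[0,1]` such that every member and
every weak limit of sequences from `Φ` has empty integral periodic zero set, then for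
each `x ∈ ℝ` there is `ε_x > 0` with `sup_{k ∈ ℤ} |ν̂(x+k)| > ε_x` for all `ν ∈ Φ`. -/
theorem stmt4 (Φ : Set (Measure ℝ))
    (hprob : ∀ ν ∈ Φ, IsProbabilityMeasure ν)
    (hsupp : ∀ ν ∈ Φ, ν (Set.Icc (0 : ℝ) 1)ᶜ = 0)
    (hZ : ∀ ν ∈ Φ, Zset ν = ∅)
    (hZlim : ∀ ν₀ : Measure ℝ, IsProbabilityMeasure ν₀ →
      (∃ s : ℕ → Measure ℝ, (∀ n, s n ∈ Φ) ∧ WeakLim s ν₀) → Zset ν₀ = ∅) :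
    ∀ x : ℝ, ∃ εx > (0 : ℝ), ∀ ν ∈ Φ, ∃ k : ℤ, εx < ‖FT ν (x + (k : ℝ))‖ :=
  stmt4_general Φ hprob hsupp hZlim
end

section
/- Let μ be a complex Borel measure on the circle T = ℝ/ℤ. Then the sum over all atoms τ of μ of |μ({τ})|² equals lim_{N→∞} (1/(2N+1)) ∑_{k=−N}^{N} |μ̂(k)|², where μ̂(k) = ∫ e^{−2πikx} dμ(x). -/
/-!
Expanding each `|μ̂(k)|²` as a double integral, the Cesàro average over `|k| ≤ N` equals
`∫∫ K_N(x - y) f(x) conj(f(y)) dμ dμ` with `K_N(t) = (2N+1)⁻¹ ∑_{|k| ≤ N} e^{-2πikt}`.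
The kernel is bounded by `1` and tends pointwise to the indicator of `ℤ` (off `ℤ` its geometric
sum stays bounded), so by dominated convergence the averages tend to the integral of
`f(x) conj(f(y))` over `{x - y ∈ ℤ}`, which on `[0,1)²` is the diagonal. By Fubini the diagonal
integral is `∫ μ{x} |f x|² dμ = ∑ₓ μ{x}² |f x|²`, and `μ{x} f(x)` is the atom of `f dμ` at `x`.
-/

open MeasureTheory Filter Topology

open Complex ComplexConjugate Finset

section GeometricSum

variable {𝕜 : Type*} [NormedDivisionRing 𝕜]

theorem sum_Icc_zpow_eq {r : 𝕜} (hr : r ≠ 0) (a b : ℤ) :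
    ∑ k ∈ Icc a b, r ^ k = r ^ a * ∑ j ∈ range (b + 1 - a).toNat, r ^ j := by
  rw [Int.Icc_eq_finset_map, sum_map, mul_sum]
  refine sum_congr rfl fun j _ => ?_
  simp [zpow_add₀ hr]

theorem norm_sum_Icc_zpow_le {r : 𝕜} (hr : ‖r‖ = 1) (hr1 : r ≠ 1) (a b : ℤ) :
    ‖∑ k ∈ Icc a b, r ^ k‖ ≤ 2 / ‖r - 1‖ := by
  have hr0 : r ≠ 0 := by rintro rfl; simp at hr
  rw [sum_Icc_zpow_eq hr0, geom_sum_eq hr1, norm_mul, norm_zpow, hr, one_zpow, one_mul, norm_div]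
  gcongr
  calc ‖r ^ (b + 1 - a).toNat - 1‖ ≤ ‖r ^ (b + 1 - a).toNat‖ + ‖(1 : 𝕜)‖ := norm_sub_le _ _
    _ = 2 := by rw [norm_pow, hr, one_pow, norm_one]; norm_num

end GeometricSum

noncomputable def fourierExp (k : ℤ) (x : ℝ) : ℂ := exp (-(2 * (Real.pi : ℂ) * I) * k * x)

theorem fourierExp_eq_zpow (k : ℤ) (x : ℝ) : fourierExp k x = fourierExp 1 x ^ k := by
  rw [fourierExp, fourierExp, ← exp_int_mul]
  push_cast
  ring_nf

theorem norm_fourierExp (k : ℤ) (x : ℝ) : ‖fourierExp k x‖ = 1 := by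
  rw [fourierExp, norm_exp]
  simp

theorem continuous_fourierExp (k : ℤ) : Continuous (fourierExp k) := by
  unfold fourierExp; fun_prop

theorem fourierExp_sub (k : ℤ) (x y : ℝ) :
    fourierExp k (x - y) = fourierExp k x * conj (fourierExp k y) := by
  rw [fourierExp, fourierExp, fourierExp, ← exp_conj, ← exp_add]
  congr 1
  simp only [map_mul, map_neg, conj_I, conj_ofReal, map_intCast, map_ofNat]
  push_cast
  ring

theorem fourierExp_one_eq_one_iff (x : ℝ) :
    fourierExp 1 x = 1 ↔ x ∈ Set.range ((↑) : ℤ → ℝ) := by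
  rw [fourierExp, exp_eq_one_iff]
  constructor
  · rintro ⟨n, hn⟩
    refine ⟨-n, ?_⟩
    have : ((-n : ℤ) : ℂ) = x := by
      apply mul_right_cancel₀ two_pi_I_ne_zero
      push_cast at hn ⊢
      linear_combination hn
    exact_mod_cast this
  · rintro ⟨m, rfl⟩
    exact ⟨-m, by push_cast; ring⟩

theorem card_Icc_neg_natCast (N : ℕ) : #(Icc (-(N : ℤ)) N) = 2 * N + 1 := by
  rw [Int.card_Icc]; omega

noncomputable def dirichletAvg (N : ℕ) (t : ℝ) : ℂ :=
  (2 * N + 1 : ℂ)⁻¹ * ∑ k ∈ Icc (-(N : ℤ)) N, fourierExp k t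

theorem continuous_dirichletAvg (N : ℕ) : Continuous (dirichletAvg N) :=
  continuous_const.mul (continuous_finsetSum _ fun k _ => continuous_fourierExp k)

theorem norm_dirichletAvg_le (N : ℕ) (t : ℝ) : ‖dirichletAvg N t‖ ≤ 1 := by
  have hN : (0 : ℝ) < 2 * N + 1 := by positivity
  have hsum : ‖∑ k ∈ Icc (-(N : ℤ)) N, fourierExp k t‖ ≤ 2 * N + 1 := by
    refine (norm_sum_le _ _).trans_eq ?_
    simp only [norm_fourierExp, sum_const, card_Icc_neg_natCast, nsmul_eq_mul, mul_one]
    push_cast; ring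
  rw [dirichletAvg, norm_mul, norm_inv, show ‖(2 * N + 1 : ℂ)‖ = 2 * N + 1 by norm_cast]
  exact inv_mul_le_one_of_le₀ hsum hN.le

theorem dirichletAvg_of_mem_range {t : ℝ} (ht : t ∈ Set.range ((↑) : ℤ → ℝ)) (N : ℕ) :
    dirichletAvg N t = 1 := by
  have hN : (2 * N + 1 : ℂ) ≠ 0 := by norm_cast
  rw [dirichletAvg, sum_congr rfl fun k _ => fourierExp_eq_zpow k t]
  simp_rw [(fourierExp_one_eq_one_iff t).2 ht, one_zpow, sum_const, card_Icc_neg_natCast,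
    nsmul_eq_mul, mul_one]
  push_cast
  exact inv_mul_cancel₀ hN

theorem norm_dirichletAvg_le_of_notMem {t : ℝ} (ht : t ∉ Set.range ((↑) : ℤ → ℝ)) (N : ℕ) :
    ‖dirichletAvg N t‖ ≤ 2 / ‖fourierExp 1 t - 1‖ / (2 * N + 1) := by
  have hsum := norm_sum_Icc_zpow_le (norm_fourierExp 1 t)
    (mt (fourierExp_one_eq_one_iff t).1 ht) (-(N : ℤ)) N
  rw [dirichletAvg, sum_congr rfl fun k _ => fourierExp_eq_zpow k t, norm_mul, norm_inv,
    show ‖(2 * N + 1 : ℂ)‖ = 2 * N + 1 by norm_cast, inv_mul_eq_div]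
  gcongr

theorem tendsto_dirichletAvg (t : ℝ) :
    Tendsto (dirichletAvg · t) atTop (𝓝 ((Set.range ((↑) : ℤ → ℝ)).indicator 1 t)) := by
  by_cases ht : t ∈ Set.range ((↑) : ℤ → ℝ)
  · simp only [dirichletAvg_of_mem_range ht, Set.indicator_of_mem ht, Pi.one_apply]
    exact tendsto_const_nhds
  · rw [Set.indicator_of_notMem ht]
    have hN : Tendsto (fun N : ℕ => 2 * (N : ℝ) + 1) atTop atTop :=
      tendsto_atTop_add_const_right _ _ (tendsto_natCast_atTop_atTop.const_mul_atTop two_pos)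
    exact squeeze_zero_norm (norm_dirichletAvg_le_of_notMem ht)
      (tendsto_const_nhds.div_atTop hN)

section Integrals

variable {α : Type*} [MeasurableSpace α] {μ : Measure α}

theorem MeasureTheory.Integrable.conj {f : α → ℂ} (hf : Integrable f μ) :
    Integrable (fun x => conj (f x)) μ :=
  conjLIE.integrable_comp_iff.2 hf

theorem integral_prod_mul_conj [SFinite μ] (g : α → ℂ) :
    ∫ z, g z.1 * conj (g z.2) ∂μ.prod μ = ((‖∫ x, g x ∂μ‖ ^ 2 : ℝ) : ℂ) := by
  rw [integral_prod_mul g (fun y => conj (g y)), integral_conj, mul_conj, normSq_eq_norm_sq]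

theorem integral_eq_tsum_measureReal_singleton_smul [SFinite μ] [MeasurableSingletonClass α]
    {g : α → ℝ} (hg : Integrable g μ) (hatoms : ∀ x, μ {x} = 0 → g x = 0) :
    ∫ x, g x ∂μ = ∑' x, μ.real {x} • g x := by
  set A := {x | 0 < μ {x}}
  have hA : A.Countable := Measure.countable_meas_pos_of_disjoint_iUnion
    (fun x => measurableSet_singleton x) fun x y hxy => Set.disjoint_singleton.2 hxy
  have hgA : ∀ x ∉ A, g x = 0 := fun x hx => hatoms x (by simpa [A] using hx)
  rw [← setIntegral_eq_integral_of_forall_compl_eq_zero hgA,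
    setIntegral_countable _ hA hg.integrableOn]
  refine tsum_subtype_eq_of_support_subset (f := fun x => μ.real {x} • g x) fun x hx => ?_
  by_contra hxA
  simp [hgA x hxA] at hx

end Integrals

section Diagonal

variable {α : Type*} [MeasurableSpace α] [MeasurableEq α] {μ : Measure α}

theorem integral_indicator_diagonal_mul_conj_apply (f : α → ℂ) (x : α) :
    ∫ y, (Set.diagonal α).indicator (fun z => f z.1 * conj (f z.2)) (x, y) ∂μ =
      ((μ.real {x} * ‖f x‖ ^ 2 : ℝ) : ℂ) := by
  have hdiag : ∀ y, (Set.diagonal α).indicator (fun z => f z.1 * conj (f z.2)) (x, y) =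
      ({x} : Set α).indicator (fun y => f x * conj (f y)) y := by
    intro y
    by_cases hxy : x = y
    · subst hxy; simp
    · simp [hxy, Ne.symm hxy]
  simp_rw [hdiag]
  rw [integral_indicator (measurableSet_singleton x), integral_singleton, mul_conj,
    normSq_eq_norm_sq]
  push_cast
  rfl

theorem integral_indicator_diagonal_mul_conj [SFinite μ] {f : α → ℂ} (hf : Integrable f μ) :
    ∫ z, (Set.diagonal α).indicator (fun z => f z.1 * conj (f z.2)) z ∂μ.prod μ =
      ((∑' x, ‖∫ y in {x}, f y ∂μ‖ ^ 2 : ℝ) : ℂ) := by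
  have hint : Integrable ((Set.diagonal α).indicator fun z => f z.1 * conj (f z.2)) (μ.prod μ) :=
    (hf.mul_prod hf.conj).indicator measurableSet_diagonal
  have hg : Integrable (fun x => μ.real {x} * ‖f x‖ ^ 2) μ := by
    have := hint.integral_prod_left
    simp_rw [integral_indicator_diagonal_mul_conj_apply] at this
    simpa only [RCLike.re_to_complex, ofReal_re] using this.re
  rw [integral_prod _ hint]
  simp_rw [integral_indicator_diagonal_mul_conj_apply]
  rw [integral_complex_ofReal,
    integral_eq_tsum_measureReal_singleton_smul hg fun x hx => by simp [measureReal_def, hx]]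
  congr 1
  refine tsum_congr fun x => ?_
  rw [integral_singleton, norm_smul, Real.norm_of_nonneg measureReal_nonneg, smul_eq_mul]
  ring

end Diagonal

noncomputable def fourierStieltjesCoeff (μ : Measure ℝ) (f : ℝ → ℂ) (k : ℤ) : ℂ :=
  ∫ x, fourierExp k x * f x ∂μ

theorem integral_dirichletAvg_sub_mul_conj {μ : Measure ℝ} [SFinite μ] {f : ℝ → ℂ}
    (hf : Integrable f μ) (N : ℕ) :
    ∫ z, dirichletAvg N (z.1 - z.2) * (f z.1 * conj (f z.2)) ∂μ.prod μ =
      ((1 / (2 * (N : ℝ) + 1) *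
        ∑ k ∈ Icc (-(N : ℤ)) N, ‖fourierStieltjesCoeff μ f k‖ ^ 2 : ℝ) : ℂ) := by
  have hek : ∀ k, Integrable (fun x => fourierExp k x * f x) μ := fun k =>
    hf.bdd_mul (continuous_fourierExp k).aestronglyMeasurable
      (.of_forall fun x => (norm_fourierExp k x).le)
  have hexpand : ∀ z : ℝ × ℝ, dirichletAvg N (z.1 - z.2) * (f z.1 * conj (f z.2)) =
      (2 * N + 1 : ℂ)⁻¹ * ∑ k ∈ Icc (-(N : ℤ)) N,
        fourierExp k z.1 * f z.1 * conj (fourierExp k z.2 * f z.2) := by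
    intro z
    simp only [dirichletAvg, fourierExp_sub, mul_assoc, sum_mul, map_mul]
    congr 1
    refine sum_congr rfl fun k _ => ?_
    ring
  simp_rw [hexpand]
  rw [integral_const_mul, integral_finsetSum _ fun k _ => (hek k).mul_prod (hek k).conj,
    sum_congr rfl fun k _ => integral_prod_mul_conj (fun x => fourierExp k x * f x)]
  push_cast
  rw [one_div]
  rfl

theorem tendsto_integral_dirichletAvg_mul {α : Type*} [MeasurableSpace α] {ρ : Measure α}
    {φ : α → ℝ} (hφ : Measurable φ) {h : α → ℂ} (hh : Integrable h ρ) :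
    Tendsto (fun N => ∫ a, dirichletAvg N (φ a) * h a ∂ρ) atTop
      (𝓝 (∫ a, (Set.range ((↑) : ℤ → ℝ)).indicator 1 (φ a) * h a ∂ρ)) := by
  refine tendsto_integral_of_dominated_convergence (‖h ·‖)
    (fun N => ((continuous_dirichletAvg N).measurable.comp hφ).aestronglyMeasurable.mul
      hh.aestronglyMeasurable) hh.norm (fun N => .of_forall fun a => ?_)
    (.of_forall fun a => (tendsto_dirichletAvg (φ a)).mul_const (h a))
  rw [norm_mul]
  exact mul_le_of_le_one_left (norm_nonneg _) (norm_dirichletAvg_le N (φ a))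

theorem sub_mem_range_intCast_iff {x y : ℝ} (hx : x ∈ Set.Ico 0 1) (hy : y ∈ Set.Ico 0 1) :
    x - y ∈ Set.range ((↑) : ℤ → ℝ) ↔ x = y := by
  calc x - y ∈ Set.range ((↑) : ℤ → ℝ) ↔ ∃ m : ℤ, x - y = m := by simp [eq_comm]
    _ ↔ Int.fract x = Int.fract y := Int.fract_eq_fract.symm
    _ ↔ x = y := by rw [Int.fract_eq_self.2 hx, Int.fract_eq_self.2 hy]

theorem indicator_range_intCast_sub_mul_ae_eq {μ : Measure ℝ} [SFinite μ]
    (hsupp : μ (Set.Ico (0 : ℝ) 1)ᶜ = 0) (h : ℝ × ℝ → ℂ) :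
    (fun z : ℝ × ℝ => (Set.range ((↑) : ℤ → ℝ)).indicator 1 (z.1 - z.2) * h z)
      =ᵐ[μ.prod μ] (Set.diagonal ℝ).indicator h := by
  have hIco : ∀ᵐ x ∂μ, x ∈ Set.Ico (0 : ℝ) 1 := measure_eq_zero_iff_ae_notMem.1 hsupp |>.mono
    fun x hx => not_not.1 hx
  filter_upwards [Measure.quasiMeasurePreserving_fst.ae hIco,
    Measure.quasiMeasurePreserving_snd.ae hIco] with z hz1 hz2
  have hmem : z.1 - z.2 ∈ Set.range ((↑) : ℤ → ℝ) ↔ z ∈ Set.diagonal ℝ :=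
    sub_mem_range_intCast_iff hz1 hz2
  by_cases hz : z ∈ Set.diagonal ℝ <;> simp [hz, hmem]

/-- Wiener's theorem on the circle (identified with `[0,1)`): for a complex measure
`f dμ` on the circle (with `μ` a finite positive measure supported in `[0,1)` and
`f ∈ L¹(μ)`), the sum of the squared moduli of its atoms equals the Cesàro limit
`lim_N (1/(2N+1)) ∑_{|k| ≤ N} |(f dμ)^(k)|²`, where
`(f dμ)^(k) = ∫ e^{-2πikx} f(x) dμ(x)`. -/
theorem stmt7 (μ : Measure ℝ) [IsFiniteMeasure μ]
    (hsupp : μ (Set.Ico (0 : ℝ) 1)ᶜ = 0)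
    (f : ℝ → ℂ) (hf : Integrable f μ) :
    Tendsto
      (fun N : ℕ => (1 / (2 * (N : ℝ) + 1)) *
        ∑ k ∈ Finset.Icc (-(N : ℤ)) (N : ℤ),
          ‖∫ x, Complex.exp (-(2 * (Real.pi : ℂ) * Complex.I) * (k : ℂ) * (x : ℂ)) * f x ∂μ‖ ^ 2)
      atTop
      (𝓝 (∑' τ : ℝ, ‖∫ x in {τ}, f x ∂μ‖ ^ 2)) := by
  have hlim := tendsto_integral_dirichletAvg_mul (φ := fun z => z.1 - z.2) (by fun_prop)
    (hf.mul_prod hf.conj)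
  rw [integral_congr_ae (indicator_range_intCast_sub_mul_ae_eq hsupp _),
    integral_indicator_diagonal_mul_conj hf] at hlim
  simp only [integral_dirichletAvg_sub_mul_conj hf] at hlim
  exact tendsto_ofReal_iff.1 hlim
end

section
/- Let M be a positive integer. Suppose for each n, N_n ≥ 2 is an integer and B_n ⊂ {0,1,...,N_n−1} with #B_n ≤ M. Then there exist ε₀ > 0 and δ₀ > 0 such that for every n ≥ 1, there exists an integer k with k/N_n ∈ [0,1] \ (1/2 − δ₀, 1/2 + δ₀) and |δ̂_{B_n/N_n}(1/2 + k)| ≥ ε₀. -/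
/-!
Write `δ̂(ξ)` for `δ̂_{B/N}(ξ)`. With `ξ₀ = e^{-πi/N}` and `ζ = ξ₀²`, a primitive `N`-th root of
unity, `#B · δ̂(1/2 + k) = ∑_{b ∈ B} ξ₀^b ζ^{bk}`, so Parseval's identity on `ℤ/N` gives
`∑_{k<N} |δ̂(1/2 + k)|² = N / #B ≥ N / M`.

If `N ≥ 8M`, the window `|k/N - 1/2| < 1/(16M)` contains at most `N/(4M)` integers, and each of
them contributes at most `1` to this sum; the remaining `k < N` carry at least `3N/(4M)`, so one
of them has `|δ̂(1/2 + k)|² ≥ 3/(4M)`.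

If `N < 8M`, take `k = 0`: the points `e^{-πib/N}`, `0 ≤ b < N`, lie in an arc of length
`π - π/N`, so their average has modulus at least `sin(π/(2N)) ≥ 1/N > 1/(8M)`.
-/

open Complex Finset ComplexConjugate

namespace IsPrimitiveRoot

variable {ζ : ℂ} {N : ℕ}

theorem sum_pow_mul_conj_pow (hζ : IsPrimitiveRoot ζ N) {b b' : ℕ} (hb : b < N) (hb' : b' < N) :
    ∑ k ∈ range N, ζ ^ (b * k) * conj (ζ ^ (b' * k)) = if b = b' then (N : ℂ) else 0 := by
  have hN : N ≠ 0 := by omega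
  have hζ0 : ζ ≠ 0 := hζ.ne_zero hN
  set w := ζ ^ b * (ζ ^ b')⁻¹
  have hterm (k : ℕ) : ζ ^ (b * k) * conj (ζ ^ (b' * k)) = w ^ k := by
    rw [map_pow, ← inv_eq_conj (hζ.norm'_eq_one hN), pow_mul, pow_mul, inv_pow, ← mul_pow]
  simp only [hterm]
  split_ifs with hbb
  · simp [w, hbb, hζ0]
  · have hw : w ≠ 1 := fun h ↦ hbb (hζ.pow_inj hb hb' (mul_inv_eq_one₀ (pow_ne_zero _ hζ0) |>.mp h))
    have hwN : w ^ N = 1 := by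
      rw [mul_pow, inv_pow, ← pow_mul, ← pow_mul, mul_comm b, mul_comm b', pow_mul, pow_mul,
        hζ.pow_eq_one]
      simp
    rw [geom_sum_eq hw, hwN, sub_self, zero_div]

theorem sum_normSq_sum_mul_pow (hζ : IsPrimitiveRoot ζ N) {s : Finset ℕ} (hs : ∀ b ∈ s, b < N)
    (c : ℕ → ℂ) :
    ∑ k ∈ range N, normSq (∑ b ∈ s, c b * ζ ^ (b * k)) = N * ∑ b ∈ s, normSq (c b) := by
  suffices h : ∑ k ∈ range N, (∑ b ∈ s, c b * ζ ^ (b * k)) * conj (∑ b ∈ s, c b * ζ ^ (b * k))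
      = N * ∑ b ∈ s, c b * conj (c b) by
    simp only [mul_conj] at h
    exact_mod_cast h
  calc _ = ∑ b ∈ s, ∑ b' ∈ s, c b * conj (c b') *
          ∑ k ∈ range N, ζ ^ (b * k) * conj (ζ ^ (b' * k)) := by
        simp only [map_sum, map_mul, sum_mul_sum]
        rw [sum_comm]
        refine sum_congr rfl fun b _ ↦ ?_
        rw [sum_comm]
        refine sum_congr rfl fun b' _ ↦ ?_
        rw [mul_sum]
        exact sum_congr rfl fun k _ ↦ by ring
    _ = ∑ b ∈ s, c b * conj (c b) * N := by
        refine sum_congr rfl fun b hb ↦ ?_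
        rw [sum_congr rfl fun b' hb' ↦ by rw [hζ.sum_pow_mul_conj_pow (hs b hb) (hs b' hb')]]
        simp only [mul_ite, mul_zero, sum_ite_eq, if_pos hb]
    _ = _ := by rw [mul_comm, sum_mul]

end IsPrimitiveRoot

theorem card_filter_mem_Ioo_le (s : Finset ℕ) {a b : ℝ} (hab : a ≤ b) :
    (#(s.filter fun k : ℕ ↦ (k : ℝ) ∈ Set.Ioo a b) : ℝ) ≤ b - a + 1 := by
  rcases lt_or_ge b 0 with hb | hb
  · have : (s.filter fun k : ℕ ↦ (k : ℝ) ∈ Set.Ioo a b) = ∅ :=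
      filter_false_of_mem fun k _ hk ↦ (hk.2.trans hb).not_ge k.cast_nonneg
    simp only [this, card_empty, Nat.cast_zero]
    linarith
  have hsub : (s.filter fun k : ℕ ↦ (k : ℝ) ∈ Set.Ioo a b) ⊆ Icc ⌈a⌉₊ ⌊b⌋₊ := fun k hk ↦ by
    obtain ⟨-, hak, hkb⟩ := mem_filter.mp hk
    exact mem_Icc.mpr ⟨Nat.ceil_le.mpr hak.le, Nat.le_floor hkb.le⟩
  have hcard := (card_le_card hsub).trans_eq (Nat.card_Icc _ _)
  have hceil := Nat.le_ceil a
  have hfloor := Nat.floor_le hb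
  rcases le_total ⌈a⌉₊ (⌊b⌋₊ + 1) with h | h
  · have := (Nat.cast_le (α := ℝ)).mpr hcard
    push_cast [Nat.cast_sub h] at this
    linarith
  · have : ⌊b⌋₊ + 1 - ⌈a⌉₊ = 0 := by omega
    rw [this, Nat.le_zero] at hcard
    rw [hcard, Nat.cast_zero]
    linarith

theorem exists_mem_not_and_le_of_card_filter_mul_lt {ι : Type*} (s : Finset ι) (p : ι → Prop)
    [DecidablePred p] (f : ι → ℝ) {A : ℝ} (hf : ∀ i ∈ s, f i ≤ A)
    (hlt : #{i ∈ s | p i} * A < ∑ i ∈ s, f i) :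
    ∃ i ∈ s, ¬ p i ∧ (∑ i ∈ s, f i - #{i ∈ s | p i} * A) / #s ≤ f i := by
  set D := ∑ i ∈ s, f i - #{i ∈ s | p i} * A
  have hD : 0 < D := sub_pos.mpr hlt
  have hbad : ∑ i ∈ s with p i, f i ≤ #{i ∈ s | p i} * A := by
    simpa only [nsmul_eq_mul] using sum_le_card_nsmul _ _ _ fun i hi ↦ hf i (mem_filter.mp hi).1
  have hgood : D ≤ ∑ i ∈ s with ¬p i, f i := by
    have := sum_filter_add_sum_filter_not s p f
    linarith
  have hne : (s.filter fun i ↦ ¬p i).Nonempty := by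
    by_contra h
    rw [not_nonempty_iff_eq_empty.mp h, sum_empty] at hgood
    linarith
  have hs : (0 : ℝ) < #s := by exact_mod_cast (hne.mono (filter_subset _ s)).card_pos
  have hconst : ∑ _i ∈ s.filter (fun i ↦ ¬p i), D / #s ≤ ∑ i ∈ s with ¬p i, f i := by
    rw [sum_const, nsmul_eq_mul]
    calc _ ≤ (#s : ℝ) * (D / #s) := by
          gcongr
          exact filter_subset _ s
      _ = D := mul_div_cancel₀ D hs.ne'
      _ ≤ _ := hgood
  obtain ⟨i, hi, hle⟩ := exists_le_of_sum_le hne hconst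
  exact ⟨i, (mem_filter.mp hi).1, (mem_filter.mp hi).2, hle⟩

theorem card_mul_cos_le_norm_sum_exp {ι : Type*} (s : Finset ι) (x : ι → ℝ) {θ : ℝ}
    (hθ : θ ≤ Real.pi) (hx : ∀ i ∈ s, |x i| ≤ θ) :
    #s * Real.cos θ ≤ ‖∑ i ∈ s, exp (x i * I)‖ :=
  calc #s * Real.cos θ = ∑ i ∈ s, Real.cos θ := by rw [sum_const, nsmul_eq_mul]
    _ ≤ ∑ i ∈ s, Real.cos (x i) := sum_le_sum fun i hi ↦ by
        rw [← Real.cos_abs (x i)]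
        exact Real.cos_le_cos_of_nonneg_of_le_pi (abs_nonneg _) hθ (hx i hi)
    _ = (∑ i ∈ s, exp (x i * I)).re := by simp only [re_sum, exp_ofReal_mul_I_re]
    _ ≤ _ := re_le_norm _

-- `fourierUniform N B ξ` is `δ̂_{B/N}(ξ)`.
noncomputable def fourierUniform (N : ℕ) (B : Finset ℕ) (ξ : ℂ) : ℂ :=
  (1 / (#B : ℂ)) * ∑ b ∈ B, exp (-(2 * Real.pi * I) * ((b : ℂ) / N) * ξ)

theorem norm_fourierUniform (N : ℕ) (B : Finset ℕ) (ξ : ℂ) :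
    ‖fourierUniform N B ξ‖ = ‖∑ b ∈ B, exp (-(2 * Real.pi * I) * ((b : ℂ) / N) * ξ)‖ / #B := by
  rw [fourierUniform, norm_mul, norm_div, norm_one, norm_natCast, one_div_mul_eq_div]

theorem norm_fourierUniform_ofReal_le_one (N : ℕ) (B : Finset ℕ) (ξ : ℝ) :
    ‖fourierUniform N B ξ‖ ≤ 1 := by
  rw [norm_fourierUniform]
  refine div_le_one_of_le₀ ((norm_sum_le _ _).trans_eq ?_) (Nat.cast_nonneg _)
  rw [sum_congr rfl fun b _ ↦ ?_, sum_const, nsmul_one]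
  rw [show -(2 * Real.pi * I) * ((b : ℂ) / N) * ξ = ((-(2 * Real.pi * b / N * ξ) : ℝ) : ℂ) * I by
    push_cast; ring, norm_exp_ofReal_mul_I]

theorem exp_mul_half_add_natCast_eq_pow (N b k : ℕ) :
    exp (-(2 * Real.pi * I) * ((b : ℂ) / N) * (1 / 2 + k)) =
      exp (-(Real.pi * I / N)) ^ b * exp (-(2 * Real.pi * I / N)) ^ (b * k) := by
  rw [← exp_nat_mul, ← exp_nat_mul, ← exp_add]
  push_cast
  ring_nf

theorem sum_range_norm_fourierUniform_half_add_sq {N : ℕ} {B : Finset ℕ} (hsub : ∀ b ∈ B, b < N) :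
    ∑ k ∈ range N, ‖fourierUniform N B (1 / 2 + k)‖ ^ 2 = N / #B := by
  rcases N.eq_zero_or_pos with rfl | hN
  · simp
  have hζ : IsPrimitiveRoot (exp (-(2 * Real.pi * I / N))) N := by
    rw [exp_neg]
    exact (isPrimitiveRoot_exp N hN.ne').inv
  have hξ (b : ℕ) : normSq (exp (-(Real.pi * I / N)) ^ b) = 1 := by
    rw [normSq_eq_norm_sq, norm_pow, show -(Real.pi * I / N) = ((-(Real.pi / N)) : ℝ) * I by
      push_cast; ring, norm_exp_ofReal_mul_I, one_pow, one_pow]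
  simp only [← normSq_eq_norm_sq, fourierUniform, exp_mul_half_add_natCast_eq_pow, normSq_mul,
    ← mul_sum, hζ.sum_normSq_sum_mul_pow hsub, hξ, sum_const, nsmul_one]
  rw [map_div₀, map_one, normSq_natCast]
  rcases eq_or_ne (#B : ℝ) 0 with hB | hB
  · simp [hB]
  · field_simp

theorem inv_le_norm_fourierUniform_half {N : ℕ} {B : Finset ℕ} (hB : B.Nonempty)
    (hsub : ∀ b ∈ B, b < N) : (N : ℝ)⁻¹ ≤ ‖fourierUniform N B (1 / 2)‖ := by
  have hN : (1 : ℝ) ≤ N := by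
    obtain ⟨b, hb⟩ := hB
    exact_mod_cast (hsub b hb).pos
  set c := Real.pi / N
  have hc : c * N = Real.pi := div_mul_cancel₀ _ (by positivity)
  have hc0 : 0 < c := by positivity
  set θ := Real.pi / 2 - c / 2
  have hrot (b : ℕ) : exp (-(2 * Real.pi * I) * ((b : ℂ) / N) * (1 / 2)) =
      exp (-(θ * I)) * exp (((θ - c * b : ℝ) : ℂ) * I) := by
    rw [← exp_add]
    simp only [θ, c]
    push_cast
    ring_nf
  have hangle : ∀ b ∈ B, |θ - c * b| ≤ θ := fun b hb ↦ by
    have : (b : ℝ) + 1 ≤ N := by exact_mod_cast hsub b hb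
    have hθ_def : θ = Real.pi / 2 - c / 2 := rfl
    rw [abs_le]
    constructor <;> nlinarith [mul_le_mul_of_nonneg_left this hc0.le, b.cast_nonneg (α := ℝ)]
  have hcos : (N : ℝ)⁻¹ ≤ Real.cos θ := by
    rw [Real.cos_pi_div_two_sub]
    calc (N : ℝ)⁻¹ = 2 / Real.pi * (c / 2) := by rw [← hc]; field_simp
      _ ≤ Real.sin (c / 2) := Real.mul_le_sin (by positivity) (by nlinarith [Real.pi_pos])
  have hθ : θ ≤ Real.pi := by linarith [show θ = Real.pi / 2 - c / 2 from rfl, Real.pi_pos]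
  have hcard : (0 : ℝ) < #B := by exact_mod_cast hB.card_pos
  rw [norm_fourierUniform, sum_congr rfl fun b _ ↦ hrot b, ← mul_sum, norm_mul,
    show -(θ * I) = (-θ : ℝ) * I by push_cast; ring, norm_exp_ofReal_mul_I, one_mul,
    le_div_iff₀ hcard]
  calc (N : ℝ)⁻¹ * #B ≤ #B * Real.cos θ := by rw [mul_comm]; gcongr
    _ ≤ _ := card_mul_cos_le_norm_sum_exp B _ hθ hangle

theorem exists_lt_notMem_Ioo_and_le_norm_fourierUniform {M N : ℕ} {B : Finset ℕ}
    (hB : B.Nonempty) (hsub : ∀ b ∈ B, b < N) (hcard : #B ≤ M) (hN : 8 * M ≤ N) :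
    ∃ k < N, (k : ℝ) / N ∉ Set.Ioo (1 / 2 - 1 / (16 * M : ℝ)) (1 / 2 + 1 / (16 * M)) ∧
      1 / (2 * M : ℝ) ≤ ‖fourierUniform N B (1 / 2 + k)‖ := by
  have hB1 : (1 : ℝ) ≤ #B := by exact_mod_cast hB.card_pos
  have hBM : (#B : ℝ) ≤ M := by exact_mod_cast hcard
  have hNr : 8 * (M : ℝ) ≤ N := by exact_mod_cast hN
  have hM : (1 : ℝ) ≤ M := hB1.trans hBM
  have hN0 : (0 : ℝ) < N := by linarith
  set δ : ℝ := 1 / (16 * M)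
  set bad := (range N).filter fun k : ℕ ↦ (k : ℝ) ∈ Set.Ioo ((1 / 2 - δ) * N) ((1 / 2 + δ) * N)
  have hbad : (#bad : ℝ) ≤ N / (4 * M) := by
    have hδ : 0 < δ := by positivity
    refine (card_filter_mem_Ioo_le _ (by nlinarith)).trans ?_
    have : (1 / 2 + δ) * N - (1 / 2 - δ) * N + 1 = N / (8 * M) + 1 := by
      simp only [δ]; field_simp; ring
    rw [this, div_add_one (by positivity), div_le_div_iff₀ (by positivity) (by positivity)]
    nlinarith
  have hlt : #bad * (1 : ℝ) < ∑ k ∈ range N, ‖fourierUniform N B (1 / 2 + k)‖ ^ 2 := by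
    rw [sum_range_norm_fourierUniform_half_add_sq hsub, mul_one]
    calc (#bad : ℝ) ≤ N / (4 * M) := hbad
      _ < N / M := by gcongr; linarith
      _ ≤ N / #B := by gcongr
  have hle_one (k : ℕ) : ‖fourierUniform N B (1 / 2 + k)‖ ^ 2 ≤ 1 :=
    pow_le_one₀ (norm_nonneg _) (by simpa using norm_fourierUniform_ofReal_le_one N B (1 / 2 + k))
  obtain ⟨k, hk, hgood, hle⟩ := exists_mem_not_and_le_of_card_filter_mul_lt (range N) _ _
    (fun k _ ↦ hle_one k) hlt
  refine ⟨k, mem_range.mp hk, fun hmem ↦ hgood ?_, ?_⟩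
  · rw [Set.mem_Ioo, lt_div_iff₀ hN0, div_lt_iff₀ hN0] at hmem
    exact hmem
  · rw [← pow_le_pow_iff_left₀ (by positivity) (norm_nonneg _) two_ne_zero]
    refine le_trans ?_ hle
    rw [sum_range_norm_fourierUniform_half_add_sq hsub, card_range, mul_one]
    have hNB : (N : ℝ) / M ≤ N / #B := by gcongr
    calc (1 / (2 * M : ℝ)) ^ 2 ≤ 3 / (4 * M) := by
          rw [div_pow, div_le_div_iff₀ (by positivity) (by positivity)]
          nlinarith
      _ = (N / M - N / (4 * M)) / N := by field_simp; ring
      _ ≤ _ := by gcongr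

theorem exists_notMem_Ioo_and_le_norm_fourierUniform {M N : ℕ} {B : Finset ℕ}
    (hB : B.Nonempty) (hsub : ∀ b ∈ B, b < N) (hcard : #B ≤ M) :
    ∃ k : ℕ, (k : ℝ) / N ∈ Set.Icc 0 1 \ Set.Ioo (1 / 2 - 1 / (16 * M : ℝ)) (1 / 2 + 1 / (16 * M)) ∧
      1 / (8 * M : ℝ) ≤ ‖fourierUniform N B (1 / 2 + k)‖ := by
  have hM : (1 : ℝ) ≤ M := by exact_mod_cast hB.card_pos.trans_le hcard
  rcases lt_or_ge N (8 * M) with hN | hN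
  · refine ⟨0, ?_, ?_⟩
    · refine ⟨by simp, fun h ↦ ?_⟩
      have : 1 / (16 * M : ℝ) ≤ 1 / 16 := by gcongr; linarith
      linarith [h.1, show ((0 : ℕ) : ℝ) / N = 0 by simp]
    · have hNr : (N : ℝ) ≤ 8 * M := by exact_mod_cast hN.le
      have hN0 : (0 : ℝ) < N := by
        obtain ⟨b, hb⟩ := hB
        exact_mod_cast (hsub b hb).pos
      rw [Nat.cast_zero, add_zero, ← inv_eq_one_div]
      exact (inv_anti₀ hN0 hNr).trans (inv_le_norm_fourierUniform_half hB hsub)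
  · obtain ⟨k, hk, hgood, hnorm⟩ :=
      exists_lt_notMem_Ioo_and_le_norm_fourierUniform hB hsub hcard hN
    have hk_le : (k : ℝ) / N ≤ 1 := div_le_one_of_le₀ (by exact_mod_cast hk.le) (by positivity)
    refine ⟨k, ⟨⟨by positivity, hk_le⟩, hgood⟩, le_trans ?_ hnorm⟩
    gcongr
    norm_num

theorem stmt9_general (M : ℕ) (N : ℕ → ℕ)
    (B : ℕ → Finset ℕ) (hne : ∀ n, (B n).Nonempty)
    (hsub : ∀ n, ∀ b ∈ B n, b < N n) (hcard : ∀ n, (B n).card ≤ M) :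
    ∃ ε₀ > (0 : ℝ), ∃ δ₀ > (0 : ℝ), ∀ n : ℕ, ∃ k : ℤ,
      ((k : ℝ) / (N n : ℝ) ∈ Set.Icc (0 : ℝ) 1 \ Set.Ioo (1/2 - δ₀) (1/2 + δ₀)) ∧
      ε₀ ≤ ‖(1 / ((B n).card : ℂ)) * ∑ b ∈ B n,
        Complex.exp (-(2 * (Real.pi : ℂ) * Complex.I) * ((b : ℂ) / (N n : ℂ)) * (1/2 + (k : ℂ)))‖ := by
  have hM : (0 : ℝ) < M := by exact_mod_cast (hne 0).card_pos.trans_le (hcard 0)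
  refine ⟨1 / (8 * M), by positivity, 1 / (16 * M), by positivity, fun n ↦ ?_⟩
  obtain ⟨k, hk, hnorm⟩ := exists_notMem_Ioo_and_le_norm_fourierUniform (hne n) (hsub n) (hcard n)
  refine ⟨k, ?_⟩
  rw [Int.cast_natCast, Int.cast_natCast]
  exact ⟨hk, hnorm⟩

/-- If `#B_n ≤ M` uniformly, with `B_n ⊆ {0,...,N_n-1}`, then there exist `ε₀, δ₀ > 0`
such that for every `n` there is an integer `k` with
`k/N_n ∈ [0,1] \ (1/2-δ₀, 1/2+δ₀)` and `|δ̂_{B_n/N_n}(1/2+k)| ≥ ε₀`. -/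
theorem stmt9 (M : ℕ) (hM : 1 ≤ M) (N : ℕ → ℕ) (hN : ∀ n, 2 ≤ N n)
    (B : ℕ → Finset ℕ) (hne : ∀ n, (B n).Nonempty)
    (hsub : ∀ n, ∀ b ∈ B n, b < N n) (hcard : ∀ n, (B n).card ≤ M) :
    ∃ ε₀ > (0 : ℝ), ∃ δ₀ > (0 : ℝ), ∀ n : ℕ, ∃ k : ℤ,
      ((k : ℝ) / (N n : ℝ) ∈ Set.Icc (0 : ℝ) 1 \ Set.Ioo (1/2 - δ₀) (1/2 + δ₀)) ∧
      ε₀ ≤ ‖(1 / ((B n).card : ℂ)) * ∑ b ∈ B n,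
        Complex.exp (-(2 * (Real.pi : ℂ) * Complex.I) * ((b : ℂ) / (N n : ℂ)) * (1/2 + (k : ℂ)))‖ :=
  stmt9_general M N B hne hsub hcard
end

section
/- Let M ≥ 1. There exists a constant c(M) = (1/42)^{2M−1} > 0 such that for every finite set B of positive integers with #B ≤ M, max_{x ∈ [0, 1/3]} |∑_{b∈B} sin(2πbx)| ≥ c(M) · (#B). -/
open Real

/-!
At `x = 1/(3m)`, with `m = max B`, every angle `2πbx` lies in `[0, 2π/3]`, so all terms of the
sum are nonnegative and the term `b = m` alone contributes `sin(2π/3) = √3/2`. Since `#B ≤ M`,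
the required bound `(1/42)^(2M-1) · #B` is at most `1/2`.
-/

lemma sin_two_pi_mul_div_nonneg {b m : ℝ} (hm : 0 < m) (hb : 0 ≤ b) (hbm : b ≤ m) :
    0 ≤ sin (2 * π * b * (1 / (3 * m))) := by
  apply sin_nonneg_of_nonneg_of_le_pi (by positivity)
  rw [mul_one_div, div_le_iff₀ (by positivity)]
  nlinarith [pi_pos]

lemma sqrt_three_div_two_le_sum_sin (B : Finset ℕ) {m : ℕ} (hm : m ∈ B) (hm0 : 0 < m)
    (hle : ∀ b ∈ B, b ≤ m) :
    √3 / 2 ≤ ∑ b ∈ B, sin (2 * π * b * (1 / (3 * m))) := by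
  have hangle : 2 * π * m * (1 / (3 * m)) = π - π / 3 := by
    field_simp
    ring
  calc √3 / 2 = sin (2 * π * m * (1 / (3 * m))) := by
        rw [hangle, sin_pi_sub, sin_pi_div_three]
    _ ≤ ∑ b ∈ B, sin (2 * π * b * (1 / (3 * m))) :=
        Finset.single_le_sum (fun b hb ↦ sin_two_pi_mul_div_nonneg (m := m) (by positivity)
          b.cast_nonneg (by exact_mod_cast hle b hb)) hm

lemma two_mul_le_forty_two_pow (M : ℕ) : 2 * M ≤ 42 ^ (2 * M - 1) :=
  calc 2 * M ≤ 2 ^ (2 * M - 1) := by have := Nat.lt_two_pow_self (n := 2 * M - 1); omega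
    _ ≤ 42 ^ (2 * M - 1) := Nat.pow_le_pow_left (by norm_num) _

lemma one_div_forty_two_pow_mul_le {n M : ℕ} (hn : n ≤ M) :
    (1 / 42 : ℝ) ^ (2 * M - 1) * n ≤ 1 / 2 := by
  have h : (2 * n : ℝ) ≤ 42 ^ (2 * M - 1) := by
    exact_mod_cast (Nat.mul_le_mul_left 2 hn).trans (two_mul_le_forty_two_pow M)
  rw [div_pow, one_pow, div_mul_eq_mul_div, one_mul, div_le_div_iff₀ (by positivity) two_pos]
  linarith

theorem stmt10_general (M : ℕ) (B : Finset ℕ) (hB : B.Nonempty)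
    (hpos : ∀ b ∈ B, 0 < b) (hcard : B.card ≤ M) :
    ∃ x ∈ Set.Icc (0 : ℝ) (1/3),
      ((1/42 : ℝ) ^ (2 * M - 1)) * (B.card : ℝ) ≤
        |∑ b ∈ B, Real.sin (2 * Real.pi * (b : ℝ) * x)| := by
  set m := B.max' hB
  have hm0 : 0 < m := hpos m (B.max'_mem hB)
  have hm1 : (1 : ℝ) ≤ m := by exact_mod_cast hm0
  refine ⟨1 / (3 * m), ⟨by positivity, ?_⟩, ?_⟩
  · gcongr
    linarith
  calc (1 / 42 : ℝ) ^ (2 * M - 1) * B.card ≤ 1 / 2 := one_div_forty_two_pow_mul_le hcard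
    _ ≤ √3 / 2 := by gcongr; exact one_le_sqrt.mpr (by norm_num)
    _ ≤ ∑ b ∈ B, sin (2 * π * b * (1 / (3 * m))) :=
        sqrt_three_div_two_le_sum_sin B (B.max'_mem hB) hm0 (B.le_max' · )
    _ ≤ _ := le_abs_self _

/-- Sum of sine problem for sets of bounded cardinality: for every nonempty finite set
`B` of positive integers with `#B ≤ M`,
`max_{x∈[0,1/3]} |∑_{b∈B} sin(2πbx)| ≥ (1/42)^{2M-1} · #B`. -/
theorem stmt10 (M : ℕ) (hM : 1 ≤ M) (B : Finset ℕ) (hB : B.Nonempty)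
    (hpos : ∀ b ∈ B, 0 < b) (hcard : B.card ≤ M) :
    ∃ x ∈ Set.Icc (0 : ℝ) (1/3),
      ((1/42 : ℝ) ^ (2 * M - 1)) * (B.card : ℝ) ≤
        |∑ b ∈ B, Real.sin (2 * Real.pi * (b : ℝ) * x)| :=
  stmt10_general M B hB hpos hcard
end

section
/- Suppose {ν_n} is a sequence of Borel probability measures supported on [0,1] converging weakly to ρ = (1/2)(δ₀ + δ₁), with ν_n({1}) = 0 for all n. Then for any ξ ∈ [0,1] with ξ ≠ 1/2, the sequence {ν̂_n} does not converge uniformly to ρ̂ on the set ξ + ℤ. -/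
/-!
Averaging over the translates `ξ + k`, `k = 0, …, N - 1`: the mean of `e^{-2πi(ξ+k)x}` tends to
`e^{-2πiξx}` for `x ∈ ℤ` and to `0` otherwise, so by dominated convergence the Cesàro means of
`ν̂(ξ + k)` tend to `ν({0})` for every finite `ν` concentrated on `[0, 1)` (Wiener's theorem in the
form needed here). As `ρ̂` is `1`-periodic, uniform convergence `ν̂_n → ρ̂` on `ξ + ℤ` would force
`ν_n({0}) → ρ̂(ξ) = (1 + e^{-2πiξ}) / 2`. Testing the weak convergence against an Urysohn function
that is `1` at `0` and `0` at `1` bounds this real limit by `1/2`, hence `e^{-2πiξ} = -1`, i.e.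
`ξ = 1/2`.
-/

open MeasureTheory Filter Topology

open Real Finset
open scoped FourierTransform

noncomputable def cesaroMean {E : Type*} [AddCommMonoid E] [Module ℝ E] (a : ℕ → E) (N : ℕ) : E :=
  (N : ℝ)⁻¹ • ∑ k ∈ range N, a k

section Cesaro

variable {E : Type*} [SeminormedAddCommGroup E] [NormedSpace ℝ E]

lemma norm_cesaroMean_le {a : ℕ → E} {C : ℝ} (h : ∀ k, ‖a k‖ ≤ C) (N : ℕ) :
    ‖cesaroMean a N‖ ≤ C := by
  rcases N.eq_zero_or_pos with rfl | hN
  · simpa [cesaroMean] using (norm_nonneg _).trans (h 0)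
  calc ‖cesaroMean a N‖ ≤ (N : ℝ)⁻¹ * ∑ k ∈ range N, ‖a k‖ := by
        rw [cesaroMean, norm_smul, Real.norm_of_nonneg (by positivity)]
        gcongr
        exact norm_sum_le _ _
    _ ≤ (N : ℝ)⁻¹ * ∑ k ∈ range N, C := by gcongr with k; exact h k
    _ = C := by simp [field]

lemma cesaroMean_const (c : E) {N : ℕ} (hN : 0 < N) : cesaroMean (fun _ => c) N = c := by
  rw [cesaroMean, sum_const, card_range, ← Nat.cast_smul_eq_nsmul ℝ, smul_smul,
    inv_mul_cancel₀ (Nat.cast_ne_zero.2 hN.ne'), one_smul]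

lemma cesaroMean_sub_const (a : ℕ → E) (c : E) {N : ℕ} (hN : 0 < N) :
    cesaroMean (fun k => a k - c) N = cesaroMean a N - c := by
  conv_rhs => rw [← cesaroMean_const c hN]
  simp only [cesaroMean, sum_sub_distrib, smul_sub]

lemma norm_sub_le_of_tendsto_cesaroMean {a : ℕ → E} {c L : E} {ε : ℝ}
    (hL : Tendsto (cesaroMean a) atTop (𝓝 L)) (h : ∀ k, ‖a k - c‖ ≤ ε) : ‖L - c‖ ≤ ε := by
  refine le_of_tendsto (hL.sub_const c).norm ?_
  filter_upwards [eventually_gt_atTop 0] with N hN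
  rw [← cesaroMean_sub_const a c hN]
  exact norm_cesaroMean_le h N

lemma cesaroMean_const_mul {A : Type*} [NonUnitalNonAssocSemiring A] [Module ℝ A]
    [SMulCommClass ℝ A A] (c : A) (a : ℕ → A) (N : ℕ) :
    cesaroMean (fun k => c * a k) N = c * cesaroMean a N := by
  simp only [cesaroMean, ← mul_sum, mul_smul_comm]

lemma tendsto_cesaroMean_pow_of_ne_one {𝕜 : Type*} [NormedField 𝕜] [NormedAlgebra ℝ 𝕜] {z : 𝕜}
    (hz : ‖z‖ ≤ 1) (h1 : z ≠ 1) : Tendsto (cesaroMean (z ^ ·)) atTop (𝓝 0) := by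
  refine squeeze_zero_norm (fun N => ?_)
    (by simpa using tendsto_inv_atTop_nhds_zero_nat.mul_const (2 / ‖z - 1‖))
  have hnum : ‖z ^ N - 1‖ ≤ 2 := by
    calc ‖z ^ N - 1‖ ≤ ‖z‖ ^ N + 1 := by simpa using norm_sub_le (z ^ N) 1
      _ ≤ 2 := by linarith [pow_le_one₀ (norm_nonneg z) hz (n := N)]
  rw [cesaroMean, geom_sum_eq h1, norm_smul, norm_div, norm_inv, Real.norm_natCast]
  gcongr

end Cesaro

lemma integral_cesaroMean {α E : Type*} [MeasurableSpace α] [NormedAddCommGroup E]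
    [NormedSpace ℝ E] {μ : Measure α} {f : ℕ → α → E} (hf : ∀ k, Integrable (f k) μ) (N : ℕ) :
    ∫ x, cesaroMean (f · x) N ∂μ = cesaroMean (fun k => ∫ x, f k x ∂μ) N := by
  simp only [cesaroMean]
  rw [integral_smul, integral_finsetSum _ fun k _ => hf k]

lemma fourierChar_eq_one_iff {t : ℝ} : 𝐞 t = 1 ↔ t ∈ Set.range ((↑) : ℤ → ℝ) := by
  rw [← Circle.coe_eq_one, Real.fourierChar_apply, Complex.exp_eq_one_iff]
  constructor
  · rintro ⟨n, hn⟩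
    refine ⟨n, ?_⟩
    have : ((t : ℂ) - n) * (2 * π * Complex.I) = 0 := by push_cast at hn; linear_combination hn
    simp [Real.pi_ne_zero, Complex.I_ne_zero, sub_eq_zero] at this
    exact_mod_cast this.symm
  · rintro ⟨n, rfl⟩
    exact ⟨n, by push_cast; ring⟩

lemma fourierChar_neg_eq_one_iff {t : ℝ} : 𝐞 (-t) = 1 ↔ t ∈ Set.range ((↑) : ℤ → ℝ) := by
  rw [AddChar.map_neg_eq_inv, inv_eq_one, fourierChar_eq_one_iff]

lemma fourierChar_neg_add_mul_natCast (ξ x : ℝ) (k : ℕ) :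
    (𝐞 (-((ξ + k) * x)) : ℂ) = 𝐞 (-(ξ * x)) * 𝐞 (-x) ^ k := by
  rw [← Circle.coe_pow, ← AddChar.map_nsmul_eq_pow, ← Circle.coe_mul, ← AddChar.map_add_eq_mul]
  congr 3
  rw [nsmul_eq_mul]
  ring

lemma FT_eq_integral_fourierChar (μ : Measure ℝ) (ξ : ℝ) :
    FT μ ξ = ∫ x, (𝐞 (-(ξ * x)) : ℂ) ∂μ := by
  simp only [FT, Real.fourierChar_apply]
  congr 1 with x
  push_cast
  ring_nf

lemma tendsto_cesaroMean_FT (μ : Measure ℝ) [IsFiniteMeasure μ] (ξ : ℝ) :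
    Tendsto (cesaroMean fun k => FT μ (ξ + k)) atTop
      (𝓝 (∫ x, (Set.range ((↑) : ℤ → ℝ)).indicator (fun x => (𝐞 (-(ξ * x)) : ℂ)) x ∂μ)) := by
  have hcont : ∀ η : ℝ, Continuous fun x : ℝ => (𝐞 (-(η * x)) : ℂ) := fun η => by fun_prop
  simp only [FT_eq_integral_fourierChar]
  rw [funext (integral_cesaroMean fun k =>
    (integrable_const (1 : ℝ)).mono' (hcont _).aestronglyMeasurable
      (ae_of_all _ fun x => (Circle.norm_coe _).le)) |>.symm]
  refine tendsto_integral_of_dominated_convergence (fun _ => 1) (fun N => ?_)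
    (integrable_const 1) (fun N => ?_) (ae_of_all _ fun x => ?_)
  · exact (continuous_finsetSum _ fun k _ => hcont _).const_smul _ |>.aestronglyMeasurable
  · exact ae_of_all _ fun x => norm_cesaroMean_le (fun k => (Circle.norm_coe _).le) N
  · simp only [fourierChar_neg_add_mul_natCast, cesaroMean_const_mul]
    by_cases hx : x ∈ Set.range ((↑) : ℤ → ℝ)
    · rw [Set.indicator_of_mem hx, fourierChar_neg_eq_one_iff.2 hx]
      refine tendsto_const_nhds.congr' ?_
      filter_upwards [eventually_gt_atTop 0] with N hN
      simp [cesaroMean, hN.ne']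
    · have h1 : (𝐞 (-x) : ℂ) ≠ 1 := by
        rwa [Ne, Circle.coe_eq_one, fourierChar_neg_eq_one_iff]
      rw [Set.indicator_of_notMem hx, ← mul_zero (𝐞 (-(ξ * x)) : ℂ)]
      exact (tendsto_cesaroMean_pow_of_ne_one (Circle.norm_coe _).le h1).const_mul _

lemma integral_indicator_range_intCast_of_ae_mem_Ico {E : Type*} [NormedAddCommGroup E]
    [NormedSpace ℝ E] [CompleteSpace E] {μ : Measure ℝ} (hμ : ∀ᵐ x ∂μ, x ∈ Set.Ico (0 : ℝ) 1)
    (g : ℝ → E) : ∫ x, (Set.range ((↑) : ℤ → ℝ)).indicator g x ∂μ = μ.real {0} • g 0 := by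
  have hae : (Set.range ((↑) : ℤ → ℝ)).indicator g =ᵐ[μ] ({0} : Set ℝ).indicator g := by
    filter_upwards [hμ] with x hx
    by_cases hx0 : x = 0
    · subst hx0
      rw [Set.indicator_of_mem (Set.mem_range.2 ⟨0, Int.cast_zero⟩),
        Set.indicator_of_mem (Set.mem_singleton 0)]
    · have hxℤ : x ∉ Set.range ((↑) : ℤ → ℝ) := by
        rintro ⟨n, rfl⟩
        have h0 : (0 : ℤ) ≤ n := by exact_mod_cast hx.1
        have h1 : n < 1 := by exact_mod_cast hx.2
        exact hx0 (by simp [show n = 0 by omega])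
      rw [Set.indicator_of_notMem hxℤ, Set.indicator_of_notMem (Set.notMem_singleton_iff.2 hx0)]
  rw [integral_congr_ae hae, integral_indicator (measurableSet_singleton 0), integral_singleton]

lemma tendsto_cesaroMean_FT_of_ae_mem_Ico (μ : Measure ℝ) [IsFiniteMeasure μ]
    (hμ : ∀ᵐ x ∂μ, x ∈ Set.Ico (0 : ℝ) 1) (ξ : ℝ) :
    Tendsto (cesaroMean fun k => FT μ (ξ + k)) atTop (𝓝 (μ.real {0} : ℂ)) := by
  simpa [integral_indicator_range_intCast_of_ae_mem_Ico hμ] using tendsto_cesaroMean_FT μ ξ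

lemma integral_rho {E : Type*} [NormedAddCommGroup E] [NormedSpace ℝ E] [CompleteSpace E]
    (f : ℝ → E) : ∫ x, f x ∂rho = (2 : ℝ)⁻¹ • (f 0 + f 1) := by
  rw [rho, integral_add_measure, integral_smul_measure, integral_smul_measure, integral_dirac,
    integral_dirac, smul_add]
  · simp
  all_goals exact (integrable_dirac (by simp)).smul_measure (by simp)

lemma FT_rho (η : ℝ) : FT rho η = (1 + 𝐞 (-η)) / 2 := by
  rw [FT_eq_integral_fourierChar, integral_rho, mul_zero, mul_one, neg_zero,
    AddChar.map_zero_eq_one, Circle.coe_one, Complex.real_smul]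
  push_cast
  ring

lemma FT_rho_add_intCast (η : ℝ) (k : ℤ) : FT rho (η + k) = FT rho η := by
  rw [FT_rho, FT_rho, neg_add, AddChar.map_add_eq_mul,
    fourierChar_neg_eq_one_iff.2 (Set.mem_range_self k), mul_one]

lemma tendsto_measureReal_zero_of_tendstoUniformlyOn {ν : ℕ → Measure ℝ}
    [∀ n, IsFiniteMeasure (ν n)] (hν : ∀ n, ∀ᵐ x ∂ν n, x ∈ Set.Ico (0 : ℝ) 1) {ξ : ℝ}
    (hU : TendstoUniformlyOn (fun n x => FT (ν n) x) (FT rho) atTop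
      {x : ℝ | ∃ k : ℤ, x = ξ + (k : ℝ)}) :
    Tendsto (fun n => ((ν n).real {0} : ℂ)) atTop (𝓝 (FT rho ξ)) := by
  refine Metric.tendsto_nhds.2 fun ε hε => ?_
  filter_upwards [Metric.tendstoUniformlyOn_iff.1 hU (ε / 2) (half_pos hε)] with n hn
  have hk : ∀ k : ℕ, ‖FT (ν n) (ξ + k) - FT rho ξ‖ ≤ ε / 2 := fun k => by
    have := hn (ξ + (k : ℤ)) ⟨k, rfl⟩
    rw [FT_rho_add_intCast, dist_comm, dist_eq_norm, Int.cast_natCast] at this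
    exact this.le
  have := norm_sub_le_of_tendsto_cesaroMean (tendsto_cesaroMean_FT_of_ae_mem_Ico _ (hν n) ξ) hk
  rw [dist_eq_norm]
  linarith

lemma measureReal_le_integral_of_one_le {α : Type*} [MeasurableSpace α] {μ : Measure α}
    [IsFiniteMeasure μ] {s : Set α} {f : α → ℝ} (hf : Integrable f μ) (hf0 : 0 ≤ f)
    (hfs : ∀ x ∈ s, 1 ≤ f x) : μ.real s ≤ ∫ x, f x ∂μ := by
  calc μ.real s ≤ μ.real {x | 1 ≤ f x} := measureReal_mono hfs
    _ ≤ ∫ x, f x ∂μ := by simpa using mul_meas_ge_le_integral_of_nonneg (ae_of_all _ hf0) hf 1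

lemma le_half_of_tendsto_measureReal_zero {ν : ℕ → Measure ℝ} [∀ n, IsFiniteMeasure (ν n)]
    (hconv : WeakLim ν rho) {r : ℝ} (hr : Tendsto (fun n => (ν n).real {0}) atTop (𝓝 r)) :
    r ≤ 1 / 2 := by
  obtain ⟨f, hf1, hf0, hf⟩ := exists_bounded_zero_one_of_closed (isClosed_singleton (x := (1 : ℝ)))
    isClosed_singleton (Set.disjoint_singleton.2 one_ne_zero)
  have hρ : ∫ x, f x ∂rho = 1 / 2 := by
    rw [integral_rho, hf0 rfl, hf1 rfl]
    norm_num
  refine le_of_tendsto_of_tendsto' hr (hρ ▸ hconv f) fun n => ?_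
  exact measureReal_le_integral_of_one_le (f.integrable _) (fun x => (hf x).1)
    fun x hx => (hf0 hx).ge

lemma eq_neg_one_of_norm_eq_one_of_nonpos {w : ℂ} {t : ℝ} (hw : ‖w‖ = 1) (hwt : w = t)
    (ht : t ≤ 0) : w = -1 := by
  rw [hwt, Complex.norm_real, Real.norm_of_nonpos ht] at hw
  rw [hwt, show t = -1 by linarith]
  push_cast
  rfl

lemma eq_half_of_fourierChar_neg_eq_neg_one {ξ : ℝ} (hξ : ξ ∈ Set.Icc (0 : ℝ) 1)
    (h : (𝐞 (-ξ) : ℂ) = -1) : ξ = 1 / 2 := by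
  rw [Real.fourierChar_apply, ← Complex.exp_pi_mul_I, Complex.exp_eq_exp_iff_exists_int] at h
  obtain ⟨n, hn⟩ := h
  have hn' : (((2 * ξ + 1 + 2 * n : ℝ)) : ℂ) * (π * Complex.I) = 0 := by
    push_cast at hn ⊢; linear_combination -hn
  have hξn : 2 * ξ + 1 + 2 * n = 0 := by
    exact_mod_cast (mul_eq_zero.1 hn').resolve_right (by simp [Real.pi_ne_zero, Complex.I_ne_zero])
  have h1 : -2 < n := by
    by_contra! h
    have : (n : ℝ) ≤ -2 := by exact_mod_cast h
    linarith [hξ.2]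
  have h2 : n < 0 := by
    by_contra! h
    have : (0 : ℝ) ≤ n := by exact_mod_cast h
    linarith [hξ.1]
  obtain rfl : n = -1 := by omega
  push_cast at hξn
  linarith

/-- If probability measures `ν_n` on `[0,1]` with `ν_n({1}) = 0` converge weakly to
`ρ = (1/2)(δ₀+δ₁)`, then for any `ξ ∈ [0,1]` with `ξ ≠ 1/2`, the Fourier transforms
`ν̂_n` do not converge uniformly to `ρ̂` on the set `ξ + ℤ`. -/
theorem stmt14 (ν : ℕ → Measure ℝ)
    (hprob : ∀ n, IsProbabilityMeasure (ν n))
    (hsupp : ∀ n, ν n (Set.Icc (0 : ℝ) 1)ᶜ = 0)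
    (hone : ∀ n, ν n {1} = 0)
    (hconv : WeakLim ν rho)
    (ξ : ℝ) (hξ : ξ ∈ Set.Icc (0 : ℝ) 1) (hhalf : ξ ≠ 1/2) :
    ¬ TendstoUniformlyOn (fun n x => FT (ν n) x) (FT rho) atTop
        {x : ℝ | ∃ k : ℤ, x = ξ + (k : ℝ)} := by
  intro hU
  have hν : ∀ n, ∀ᵐ x ∂ν n, x ∈ Set.Ico (0 : ℝ) 1 := fun n => by
    refine measure_mono_null (fun x hx => ?_) (measure_union_null (hsupp n) (hone n))
    by_cases h1 : x = 1
    · exact Or.inr h1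
    · exact Or.inl fun hI => hx ⟨hI.1, hI.2.lt_of_ne h1⟩
  have hlim := tendsto_measureReal_zero_of_tendstoUniformlyOn hν hU
  obtain ⟨r, hr⟩ : FT rho ξ ∈ Set.range ((↑) : ℝ → ℂ) :=
    Complex.isometry_ofReal.isClosedEmbedding.isClosed_range.mem_of_tendsto hlim
      (Eventually.of_forall fun n => Set.mem_range_self _)
  rw [← hr, tendsto_ofReal_iff] at hlim
  have hr_le := le_half_of_tendsto_measureReal_zero hconv hlim
  refine hhalf (eq_half_of_fourierChar_neg_eq_neg_one hξ
    (eq_neg_one_of_norm_eq_one_of_nonpos (Circle.norm_coe _) (t := 2 * r - 1) ?_ (by linarith)))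
  rw [FT_rho] at hr
  push_cast
  linear_combination -2 * hr
end

section
/- Let μ(N_n, B_n) be a Cantor–Moran measure with B_n ⊂ {0,1,...,N_n−1} and suppose c := sup_n c_{ν_{>n}} < 1, where [0, c_{ν_{>n}}] is the convex hull of the support of the pull-back tail measure ν_{>n}. Then every weak limit ν of {ν_{>n}} satisfies ν({1}) = 0, and hence {ν_{>n}} is an admissible family (all integral periodic zero sets of the ν_{>n} and of their weak limits are empty). -/
/-!
If `ξ ∈ Z(μ)`, every Fourier coefficient of the complex measure `e^{-2πiξx} μ(dx)`, folded onto
the circle `ℝ/ℤ`, vanishes; by density of trigonometric polynomials, so does its integral against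
every continuous `1`-periodic function. When `μ` lives on an interval `[a, b]` of length `< 1`,
`e^{2πiξx}` on `[a, b]` extends to a continuous `1`-periodic function, and integrating it
against `e^{-2πiξx} μ(dx)` gives `μ(ℝ) = 0`, a contradiction. This applies to every `ν_{>n}`, with
`[a, b] = [0, c̄]`, and to every weak limit `ν₀`: by the portmanteau theorem the open set
`[0, c̄]ᶜ`, which contains `1`, is `ν₀`-null.
-/

open MeasureTheory Filter Topology

open Set Complex

theorem integral_addCircle_mul_eq_zero_of_forall_fourier {μ : Measure ℝ} {h : ℝ → ℂ}
    (hh : Integrable h μ)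
    (hfourier : ∀ n : ℤ, ∫ x, fourier n (x : AddCircle (1 : ℝ)) * h x ∂μ = 0)
    (F : C(AddCircle (1 : ℝ), ℂ)) :
    ∫ x, F (x : AddCircle (1 : ℝ)) * h x ∂μ = 0 := by
  have hint : ∀ F : C(AddCircle (1 : ℝ), ℂ),
      Integrable (fun x : ℝ => F (x : AddCircle (1 : ℝ)) * h x) μ := fun F =>
    hh.bdd_mul (F.continuous.comp (AddCircle.continuous_mk' 1)).aestronglyMeasurable
      (ae_of_all _ fun x => F.norm_coe_le_norm _)
  let L : C(AddCircle (1 : ℝ), ℂ) →L[ℂ] ℂ := LinearMap.mkContinuous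
    { toFun := fun F => ∫ x, F (x : AddCircle (1 : ℝ)) * h x ∂μ
      map_add' := fun F G => by
        simp only [ContinuousMap.add_apply, add_mul]
        exact integral_add (hint F) (hint G)
      map_smul' := fun a F => by
        simp only [ContinuousMap.smul_apply, smul_eq_mul, mul_assoc, RingHom.id_apply]
        exact integral_const_mul a _ }
    (∫ x, ‖h x‖ ∂μ) fun F => by
      calc ‖∫ x, F (x : AddCircle (1 : ℝ)) * h x ∂μ‖ ≤ ∫ x, ‖F‖ * ‖h x‖ ∂μ :=
            norm_integral_le_of_norm_le (hh.norm.const_mul _) (ae_of_all _ fun x => by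
              rw [norm_mul]; gcongr; exact F.norm_coe_le_norm _)
        _ = (∫ x, ‖h x‖ ∂μ) * ‖F‖ := by rw [integral_const_mul, mul_comm]
  have hL : L = 0 := ContinuousLinearMap.ext_on
    (Submodule.dense_iff_topologicalClosure_eq_top.2 span_fourier_closure_eq_top)
    (by rintro _ ⟨n, rfl⟩; exact hfourier n)
  exact DFunLike.congr_fun hL F

theorem exists_addCircle_eqOn_Icc {E : Type*} [TopologicalSpace E] {g : ℝ → E}
    (hg : Continuous g) {a b : ℝ} (hb : b < a + 1) :
    ∃ G : C(AddCircle (1 : ℝ), E), ∀ x ∈ Icc a b, G (x : AddCircle (1 : ℝ)) = g x := by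
  rcases lt_or_ge b a with hba | hab
  · exact ⟨ContinuousMap.const _ (g a), fun x hx => absurd (hx.1.trans hx.2) (not_le.2 hba)⟩
  -- `w` folds `[a, a + 1]` onto `[a, b]`, fixing `[a, b]` and sending both endpoints to `a`.
  set t := (b - a) / (1 - (b - a))
  let w : ℝ → ℝ := fun x => min x (a + t * (a + 1 - x))
  have hw : Continuous w := by fun_prop
  have hw_Icc : ∀ x ∈ Icc a b, w x = x := fun x hx => by
    refine min_eq_left ?_
    have : (x - a) * (1 - (b - a)) ≤ (b - a) * (a + 1 - x) := by nlinarith [hx.1, hx.2]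
    rw [← sub_le_iff_le_add', div_mul_eq_mul_div, le_div_iff₀ (by linarith)]
    linarith
  have hw_end : w (a + 1) = w a := by
    change min (a + 1) (a + t * (a + 1 - (a + 1))) = w a
    rw [hw_Icc a ⟨le_rfl, hab⟩, sub_self, mul_zero, add_zero]
    exact min_eq_right (by linarith)
  refine ⟨⟨AddCircle.liftIco 1 a (g ∘ w),
    AddCircle.liftIco_continuous (by simp only [Function.comp_apply, hw_end])
      (hg.comp hw).continuousOn⟩, fun x hx => ?_⟩
  change AddCircle.liftIco 1 a (g ∘ w) x = g x
  rw [AddCircle.liftIco_coe_apply ⟨hx.1, by linarith [hx.2]⟩, Function.comp_apply, hw_Icc x hx]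

theorem Zset_eq_empty_of_measure_compl_Icc_eq_zero (μ : Measure ℝ) [IsFiniteMeasure μ]
    [NeZero μ] {a b : ℝ} (hb : b < a + 1) (hμ : μ (Icc a b)ᶜ = 0) : Zset μ = ∅ := by
  refine eq_empty_of_forall_notMem fun ξ hξ => ?_
  let e : ℝ → ℂ := fun x => exp (-(2 * Real.pi * I) * ξ * x)
  have he : Integrable e μ :=
    Integrable.of_bound (by fun_prop) 1 (ae_of_all _ fun x => by simp [e, norm_exp])
  have hfourier : ∀ n : ℤ, ∫ x, fourier n (x : AddCircle (1 : ℝ)) * e x ∂μ = 0 := fun n => by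
    refine Eq.trans (integral_congr_ae (ae_of_all _ fun x => ?_)) (hξ (-n))
    simp only [fourier_coe_apply, e, ← exp_add]
    push_cast
    ring_nf
  obtain ⟨G, hG⟩ := exists_addCircle_eqOn_Icc (g := fun x : ℝ => exp (2 * Real.pi * I * ξ * x))
    (by fun_prop) hb
  have hone : ∀ᵐ x : ℝ ∂μ, G (x : AddCircle (1 : ℝ)) * e x = 1 := by
    filter_upwards [ae_iff.2 hμ] with x hx
    rw [hG x hx, ← exp_add, ← exp_zero]
    ring_nf
  have := integral_addCircle_mul_eq_zero_of_forall_fourier he hfourier G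
  simp [integral_congr_ae hone, measureReal_eq_zero_iff] at this
  exact NeZero.ne μ this

theorem WeakLim.measure_le_liminf {s : ℕ → Measure ℝ} {ν₀ : Measure ℝ} [IsProbabilityMeasure ν₀]
    (h : WeakLim s ν₀) (hs : ∀ n, IsProbabilityMeasure (s n)) {O : Set ℝ} (hO : IsOpen O) :
    ν₀ O ≤ atTop.liminf fun n => s n O :=
  ProbabilityMeasure.le_liminf_measure_open_of_tendsto (μ := ⟨ν₀, ‹_›⟩)
    (μs := fun n => ⟨s n, hs n⟩) (ProbabilityMeasure.tendsto_iff_forall_integral_tendsto.2 h) hO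

theorem stmt16_general (ν : ℕ → Measure ℝ)
    (hprob : ∀ n, IsProbabilityMeasure (ν n))
    (c : ℕ → ℝ)
    (hsupp : ∀ n, ν n (Set.Icc (0 : ℝ) (c n))ᶜ = 0)
    (cbar : ℝ) (hcbar : cbar < 1) (hle : ∀ n, c n ≤ cbar) :
    (∀ n, Zset (ν n) = ∅) ∧
    ∀ ν₀ : Measure ℝ, IsProbabilityMeasure ν₀ →
      (∃ φ : ℕ → ℕ, StrictMono φ ∧ WeakLim (fun j => ν (φ j)) ν₀) →
      ν₀ {1} = 0 ∧ Zset ν₀ = ∅ := by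
  have hcbar' : cbar < 0 + 1 := by linarith
  have hnull : ∀ n, ν n (Icc 0 cbar)ᶜ = 0 := fun n =>
    measure_mono_null (compl_subset_compl.2 (Icc_subset_Icc_right (hle n))) (hsupp n)
  refine ⟨fun n => Zset_eq_empty_of_measure_compl_Icc_eq_zero (ν n) hcbar' (hnull n), ?_⟩
  rintro ν₀ hν₀ ⟨φ, -, hlim⟩
  have hnull₀ : ν₀ (Icc 0 cbar)ᶜ = 0 := by
    have h := hlim.measure_le_liminf (fun j => hprob (φ j))
      (isClosed_Icc (a := 0) (b := cbar)).isOpen_compl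
    simp only [hnull, liminf_const] at h
    exact nonpos_iff_eq_zero.1 h
  exact ⟨measure_mono_null (by simpa using hcbar) hnull₀,
    Zset_eq_empty_of_measure_compl_Icc_eq_zero ν₀ hcbar' hnull₀⟩

/-- For the pulled-back tails `ν_{>n}` of a Cantor–Moran measure (nonatomic
probability measures supported in `[0, c_n]`), if `sup_n c_n < 1` then every weak
limit `ν₀` of subsequences satisfies `ν₀({1}) = 0` and `Z(ν₀) = ∅`; together with
`Z(ν_{>n}) = ∅` for all `n`, the family `{ν_{>n}}` is admissible. -/
theorem stmt16 (ν : ℕ → Measure ℝ)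
    (hprob : ∀ n, IsProbabilityMeasure (ν n))
    (hatom : ∀ n (x : ℝ), ν n {x} = 0)
    (c : ℕ → ℝ) (hc0 : ∀ n, 0 ≤ c n)
    (hsupp : ∀ n, ν n (Set.Icc (0 : ℝ) (c n))ᶜ = 0)
    (cbar : ℝ) (hcbar : cbar < 1) (hle : ∀ n, c n ≤ cbar) :
    (∀ n, Zset (ν n) = ∅) ∧
    ∀ ν₀ : Measure ℝ, IsProbabilityMeasure ν₀ →
      (∃ φ : ℕ → ℕ, StrictMono φ ∧ WeakLim (fun j => ν (φ j)) ν₀) →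
      ν₀ {1} = 0 ∧ Zset ν₀ = ∅ :=
  stmt16_general ν hprob c hsupp cbar hcbar hle
end

section
/- Suppose n ∈ ℕ, and k ∈ ℤ is written as k = ℓ₁ + N_{n+1}ℓ₂ + N_{n+1}N_{n+2}ℓ₃ + ⋯ + N_{n+1}⋯N_{n+r−1}ℓ_r with ℓ_t ∈ {0,1,...,N_{n+t}−1}. Define ξ₁ = 1/2 and ξ_t = (ξ_{t−1} + ℓ_{t−1})/N_{n+t−1} for t ≥ 2. Then ν̂_{>n}(1/2 + k) = (∏_{t=1}^{r} δ̂_{B_{n+t}/N_{n+t}}(ξ_t + ℓ_t)) · ν̂_{>(n+r)}(ξ_{r+1}). -/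
open MeasureTheory Filter Topology

/-- `δ̂_{B_m/N_m}(ξ) = (1/#B_m) ∑_{b ∈ B_m} e^{-2πi(b/N_m)ξ}`. -/
noncomputable def mask (N : ℕ → ℕ) (B : ℕ → Finset ℕ) (m : ℕ) (ξ : ℝ) : ℂ :=
  (1 / ((B m).card : ℂ)) * ∑ b ∈ B m,
    Complex.exp (-(2 * (Real.pi : ℂ) * Complex.I) * ((b : ℂ) / (N m : ℂ)) * (ξ : ℂ))

/-! Each application of the refinement identity at the point `ξ_t + ℓ_t + N_{n+t}·j` peels off
the lowest remaining digit: the mask factor forgets the integer shift `N_{n+t}·j` by periodicity,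
and the rescaled argument becomes `ξ_{t+1} + j`. Inducting on the number of digits, with the
higher-order part of `k` kept as an arbitrary integer `j`, gives the product formula. -/

lemma mask_add_mul_intCast (N : ℕ → ℕ) (B : ℕ → Finset ℕ) {m : ℕ} (hm : N m ≠ 0)
    (x : ℝ) (j : ℤ) : mask N B m (x + (N m : ℝ) * j) = mask N B m x := by
  unfold mask
  congr 1
  refine Finset.sum_congr rfl fun b _ => ?_
  have hNC : (N m : ℂ) ≠ 0 := by exact_mod_cast hm
  have hsplit : -(2 * (Real.pi : ℂ) * Complex.I) * ((b : ℂ) / (N m : ℂ)) *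
      ((x + (N m : ℝ) * j : ℝ) : ℂ) =
      -(2 * (Real.pi : ℂ) * Complex.I) * ((b : ℂ) / (N m : ℂ)) * (x : ℂ) +
      ((-(b * j) : ℤ) : ℂ) * (2 * (Real.pi : ℂ) * Complex.I) := by
    push_cast
    field_simp
    ring
  rw [hsplit, Complex.exp_add, Complex.exp_int_mul_two_pi_mul_I, mul_one]

section Refinement

variable {N : ℕ → ℕ} {B : ℕ → Finset ℕ} {F : ℕ → ℝ → ℂ}

lemma refinement_add_mul_intCast (hN : ∀ m, N m ≠ 0)
    (hRef : ∀ m (ξ : ℝ), F m ξ = mask N B (m + 1) ξ * F (m + 1) (ξ / (N (m + 1) : ℝ)))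
    (m : ℕ) (x : ℝ) (j : ℤ) :
    F m (x + (N (m + 1) : ℝ) * j) = mask N B (m + 1) x * F (m + 1) (x / (N (m + 1) : ℝ) + j) := by
  have hN' : (N (m + 1) : ℝ) ≠ 0 := by exact_mod_cast hN (m + 1)
  rw [hRef, mask_add_mul_intCast N B (hN (m + 1)), add_div, mul_div_cancel_left₀ _ hN']

theorem refinement_iterate (hN : ∀ m, N m ≠ 0)
    (hRef : ∀ m (ξ : ℝ), F m ξ = mask N B (m + 1) ξ * F (m + 1) (ξ / (N (m + 1) : ℝ)))
    (n : ℕ) (l : ℕ → ℕ) (ξ : ℕ → ℝ)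
    (hξ : ∀ t, 1 ≤ t → ξ (t + 1) = (ξ t + (l t : ℝ)) / (N (n + t) : ℝ)) (r : ℕ) (j : ℤ) :
    F n (ξ 1 + ((∑ t ∈ Finset.Icc 1 r, l t * ∏ s ∈ Finset.Icc 1 (t - 1), N (n + s) : ℕ) : ℝ)
        + ((∏ s ∈ Finset.Icc 1 r, N (n + s) : ℕ) : ℝ) * j) =
      (∏ t ∈ Finset.Icc 1 r, mask N B (n + t) (ξ t + (l t : ℝ))) * F (n + r) (ξ (r + 1) + j) := by
  induction r generalizing j with
  | zero => simp
  | succ r ih =>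
    have hshift : ((∑ t ∈ Finset.Icc 1 (r + 1), l t * ∏ s ∈ Finset.Icc 1 (t - 1), N (n + s) : ℕ)
          : ℝ) + ((∏ s ∈ Finset.Icc 1 (r + 1), N (n + s) : ℕ) : ℝ) * j =
        ((∑ t ∈ Finset.Icc 1 r, l t * ∏ s ∈ Finset.Icc 1 (t - 1), N (n + s) : ℕ) : ℝ) +
          ((∏ s ∈ Finset.Icc 1 r, N (n + s) : ℕ) : ℝ) * ((l (r + 1) + N (n + r + 1) * j : ℤ)) := by
      rw [Finset.sum_Icc_succ_top (by omega), Finset.prod_Icc_succ_top (by omega),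
        Nat.add_sub_cancel, ← add_assoc n r 1]
      push_cast
      ring
    rw [add_assoc, hshift, ← add_assoc, ih, Int.cast_add, Int.cast_natCast, ← add_assoc,
      Int.cast_mul, Int.cast_natCast, refinement_add_mul_intCast hN hRef,
      Finset.prod_Icc_succ_top (by omega), hξ (r + 1) (by omega), ← add_assoc n r 1, mul_assoc]

end Refinement

theorem stmt17_general (N : ℕ → ℕ) (hN : ∀ n, 2 ≤ N n)
    (B : ℕ → Finset ℕ)
    (ν : ℕ → Measure ℝ)
    (hRef : ∀ n (ξ : ℝ), FT (ν n) ξ = mask N B (n+1) ξ * FT (ν (n+1)) (ξ / (N (n+1) : ℝ)))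
    (n r : ℕ) (l : ℕ → ℕ)
    (k : ℕ)
    (hk : k = ∑ t ∈ Finset.Icc 1 r, l t * ∏ s ∈ Finset.Icc 1 (t - 1), N (n + s))
    (ξ : ℕ → ℝ) (hξ1 : ξ 1 = 1/2)
    (hξ : ∀ t, 1 ≤ t → ξ (t + 1) = (ξ t + (l t : ℝ)) / (N (n + t) : ℝ)) :
    FT (ν n) (1/2 + (k : ℝ)) =
      (∏ t ∈ Finset.Icc 1 r, mask N B (n + t) (ξ t + (l t : ℝ))) *
        FT (ν (n + r)) (ξ (r + 1)) := by
  subst hk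
  have hN₀ : ∀ m, N m ≠ 0 := fun m => by have := hN m; omega
  simpa [hξ1] using refinement_iterate (F := fun m => FT (ν m)) hN₀ hRef n l ξ hξ r 0

/-- Iterating the refinement identity
`ν̂_{>n}(ξ) = δ̂_{B_{n+1}/N_{n+1}}(ξ)·ν̂_{>(n+1)}(ξ/N_{n+1})`: if
`k = ℓ₁ + N_{n+1}ℓ₂ + ⋯ + N_{n+1}⋯N_{n+r-1}ℓ_r` with `ℓ_t ∈ {0,...,N_{n+t}-1}`,
and `ξ₁ = 1/2`, `ξ_{t+1} = (ξ_t + ℓ_t)/N_{n+t}`, then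
`ν̂_{>n}(1/2+k) = (∏_{t=1}^r δ̂_{B_{n+t}/N_{n+t}}(ξ_t+ℓ_t)) · ν̂_{>(n+r)}(ξ_{r+1})`. -/
theorem stmt17 (N : ℕ → ℕ) (hN : ∀ n, 2 ≤ N n)
    (B : ℕ → Finset ℕ) (hne : ∀ n, (B n).Nonempty) (hsub : ∀ n, ∀ b ∈ B n, b < N n)
    (ν : ℕ → Measure ℝ)
    (hRef : ∀ n (ξ : ℝ), FT (ν n) ξ = mask N B (n+1) ξ * FT (ν (n+1)) (ξ / (N (n+1) : ℝ)))
    (n r : ℕ) (l : ℕ → ℕ) (hl : ∀ t, 1 ≤ t → t ≤ r → l t < N (n + t))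
    (k : ℕ)
    (hk : k = ∑ t ∈ Finset.Icc 1 r, l t * ∏ s ∈ Finset.Icc 1 (t - 1), N (n + s))
    (ξ : ℕ → ℝ) (hξ1 : ξ 1 = 1/2)
    (hξ : ∀ t, 1 ≤ t → ξ (t + 1) = (ξ t + (l t : ℝ)) / (N (n + t) : ℝ)) :
    FT (ν n) (1/2 + (k : ℝ)) =
      (∏ t ∈ Finset.Icc 1 r, mask N B (n + t) (ξ t + (l t : ℝ))) *
        FT (ν (n + r)) (ξ (r + 1)) :=
  stmt17_general N hN B ν hRef n r l k hk ξ hξ1 hξ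
end
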